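/- arXiv:1510.09054 — 8 statements merged into one kernel-verified Lean document; each statement's English description precedes it below -/
import Mathlib

section
/- Let β > 0 and suppose f, g : [0,1] → ℝ are nonnegative and there exist constants κ_f, κ_g ≥ 0 such that for all x ∈ [0,1] and all integers 1 ≤ j < β, |f^(j)(x)|^β ≤ κ_f^j f(x)^(β−j) and |g^(j)(x)|^β ≤ κ_g^j g(x)^(β−j). Then for all x ∈ [0,1] and 1 ≤ j < β, |f^(j)(x) + g^(j)(x)|^β ≤ (κ_f + κ_g)^j (f(x)+g(x))^(β−j). That is, the flatness seminorm satisfies the triangle inequality. -/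
open Set Real

lemma holder2 {a b c d p q : ℝ} (ha : 0 ≤ a) (hb : 0 ≤ b) (hc : 0 ≤ c) (hd : 0 ≤ d)
    (hp : 0 < p) (hq : 0 < q) (hpq : p + q = 1) :
    a ^ p * c ^ q + b ^ p * d ^ q ≤ (a + b) ^ p * (c + d) ^ q := by
  rcases eq_or_lt_of_le (add_nonneg ha hb) with hab | hab
  · have ha0 : a = 0 := by linarith [(add_eq_zero_iff_of_nonneg ha hb).1 hab.symm |>.1]
    have hb0 : b = 0 := by linarith [(add_eq_zero_iff_of_nonneg ha hb).1 hab.symm |>.2]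
    simp [ha0, hb0, Real.zero_rpow hp.ne', ← hab]
  rcases eq_or_lt_of_le (add_nonneg hc hd) with hcd | hcd
  · have hc0 : c = 0 := by linarith [(add_eq_zero_iff_of_nonneg hc hd).1 hcd.symm |>.1]
    have hd0 : d = 0 := by linarith [(add_eq_zero_iff_of_nonneg hc hd).1 hcd.symm |>.2]
    simp [hc0, hd0, Real.zero_rpow hq.ne', ← hcd]
  have h1 : (a / (a + b)) ^ p * (c / (c + d)) ^ q ≤ p * (a / (a + b)) + q * (c / (c + d)) := by
    have := Real.geom_mean_le_arith_mean2_weighted hp.le hq.le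
      (div_nonneg ha hab.le) (div_nonneg hc hcd.le) hpq
    linarith [this]
  have h2 : (b / (a + b)) ^ p * (d / (c + d)) ^ q ≤ p * (b / (a + b)) + q * (d / (c + d)) := by
    have := Real.geom_mean_le_arith_mean2_weighted hp.le hq.le
      (div_nonneg hb hab.le) (div_nonneg hd hcd.le) hpq
    linarith [this]
  have hsum : (a / (a + b)) ^ p * (c / (c + d)) ^ q + (b / (a + b)) ^ p * (d / (c + d)) ^ q ≤ 1 := by
    have e1 : a / (a + b) + b / (a + b) = 1 := by field_simp
    have e2 : c / (c + d) + d / (c + d) = 1 := by field_simp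
    nlinarith [h1, h2]
  have key : a ^ p * c ^ q + b ^ p * d ^ q ≤ ((a + b) ^ p * (c + d) ^ q) * 1 := by
    calc a ^ p * c ^ q + b ^ p * d ^ q
        = ((a + b) ^ p * (c + d) ^ q) *
          ((a / (a + b)) ^ p * (c / (c + d)) ^ q + (b / (a + b)) ^ p * (d / (c + d)) ^ q) := by
          rw [Real.div_rpow ha hab.le, Real.div_rpow hb hab.le,
            Real.div_rpow hc hcd.le, Real.div_rpow hd hcd.le]
          field_simp
      _ ≤ ((a + b) ^ p * (c + d) ^ q) * 1 := by
          apply mul_le_mul_of_nonneg_left hsum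
          positivity
  simpa using key

lemma flat_root {β : ℝ} (hβ : 0 < β) {a κ v : ℝ} (hκ : 0 ≤ κ) (hv : 0 ≤ v) {j : ℕ}
    (h : |a| ^ β ≤ κ ^ j * v ^ (β - (j : ℝ))) :
    |a| ≤ κ ^ ((j : ℝ) / β) * v ^ ((β - (j : ℝ)) / β) := by
  have h1 : |a| = (|a| ^ β) ^ β⁻¹ := by
    rw [← Real.rpow_mul (abs_nonneg a), mul_inv_cancel₀ hβ.ne', Real.rpow_one]
  rw [h1]
  calc (|a| ^ β) ^ β⁻¹ ≤ (κ ^ j * v ^ (β - (j : ℝ))) ^ β⁻¹ :=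
        Real.rpow_le_rpow (Real.rpow_nonneg (abs_nonneg a) β) h (inv_nonneg.2 hβ.le)
    _ = κ ^ ((j : ℝ) / β) * v ^ ((β - (j : ℝ)) / β) := by
        rw [Real.mul_rpow (by positivity) (Real.rpow_nonneg hv _),
          ← Real.rpow_natCast κ j, ← Real.rpow_mul hκ, ← Real.rpow_mul hv]
        rw [div_eq_mul_inv, div_eq_mul_inv]


/-- Triangle inequality for the flatness seminorm: if `f` and `g` satisfy the flatness
condition with constants `κ_f` and `κ_g`, then `f^{(j)} + g^{(j)}` satisfies it for `f + g`
with constant `κ_f + κ_g`. -/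
theorem flatness_seminorm_triangle
    (β : ℝ) (hβ : 0 < β) (n : ℕ) (hn : (n : ℝ) < β) (hn' : β ≤ n + 1)
    (f g : ℝ → ℝ) (κf κg : ℝ) (hκf : 0 ≤ κf) (hκg : 0 ≤ κg)
    (hf0 : ∀ x ∈ Icc (0:ℝ) 1, 0 ≤ f x) (hg0 : ∀ x ∈ Icc (0:ℝ) 1, 0 ≤ g x)
    (hfsmooth : ContDiffOn ℝ n f (Icc (0:ℝ) 1))
    (hgsmooth : ContDiffOn ℝ n g (Icc (0:ℝ) 1))
    (hfflat : ∀ x ∈ Icc (0:ℝ) 1, ∀ j : ℕ, 1 ≤ j → (j : ℝ) < β →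
      |iteratedDerivWithin j f (Icc (0:ℝ) 1) x| ^ β ≤ κf ^ j * f x ^ (β - (j : ℝ)))
    (hgflat : ∀ x ∈ Icc (0:ℝ) 1, ∀ j : ℕ, 1 ≤ j → (j : ℝ) < β →
      |iteratedDerivWithin j g (Icc (0:ℝ) 1) x| ^ β ≤ κg ^ j * g x ^ (β - (j : ℝ))) :
    ∀ x ∈ Icc (0:ℝ) 1, ∀ j : ℕ, 1 ≤ j → (j : ℝ) < β →
      |iteratedDerivWithin j f (Icc (0:ℝ) 1) x + iteratedDerivWithin j g (Icc (0:ℝ) 1) x| ^ β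
        ≤ (κf + κg) ^ j * (f x + g x) ^ (β - (j : ℝ)) := by
  intro x hx j hj hjβ
  set a := iteratedDerivWithin j f (Icc (0:ℝ) 1) x with ha
  set b := iteratedDerivWithin j g (Icc (0:ℝ) 1) x with hb
  have hfx := hf0 x hx
  have hgx := hg0 x hx
  have hj1 : (1:ℝ) ≤ (j:ℝ) := by exact_mod_cast hj
  have hp : 0 < (j : ℝ) / β := div_pos (by linarith) hβ
  have hq : 0 < (β - (j : ℝ)) / β := div_pos (by linarith) hβ
  have hpq : (j : ℝ) / β + (β - (j : ℝ)) / β = 1 := by field_simp; ring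
  have hA : |a| ≤ κf ^ ((j : ℝ) / β) * f x ^ ((β - (j : ℝ)) / β) :=
    flat_root hβ hκf hfx (hfflat x hx j hj hjβ)
  have hB : |b| ≤ κg ^ ((j : ℝ) / β) * g x ^ ((β - (j : ℝ)) / β) :=
    flat_root hβ hκg hgx (hgflat x hx j hj hjβ)
  have hhol := holder2 hκf hκg hfx hgx hp hq hpq
  have habs : |a + b| ≤ (κf + κg) ^ ((j : ℝ) / β) * (f x + g x) ^ ((β - (j : ℝ)) / β) :=
    (abs_add_le a b).trans (le_trans (add_le_add hA hB) hhol)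
  calc |a + b| ^ β ≤ ((κf + κg) ^ ((j : ℝ) / β) * (f x + g x) ^ ((β - (j : ℝ)) / β)) ^ β :=
        Real.rpow_le_rpow (abs_nonneg _) habs hβ.le
    _ = (κf + κg) ^ j * (f x + g x) ^ (β - (j : ℝ)) := by
        rw [Real.mul_rpow (Real.rpow_nonneg (by linarith) _) (Real.rpow_nonneg (by linarith) _),
          ← Real.rpow_mul (by linarith : (0:ℝ) ≤ κf + κg),
          ← Real.rpow_mul (by linarith : (0:ℝ) ≤ f x + g x),
          div_mul_cancel₀ _ hβ.ne', div_mul_cancel₀ _ hβ.ne', Real.rpow_natCast]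
end

section
/- Let β > 1 and let f, g : [0,1] → [0,∞) be ⌊β⌋-times differentiable functions satisfying the flatness conditions |f^(j)(x)|^β ≤ κ_f^j f(x)^(β−j) and |g^(j)(x)|^β ≤ κ_g^j g(x)^(β−j) for all x ∈ [0,1] and 1 ≤ j ≤ ⌊β⌋. Then for all x ∈ [0,1] and all 1 ≤ j ≤ ⌊β⌋, |(fg)^(j)(x)|^β ≤ (2^(β−1)(κ_f ‖g‖_∞ + κ_g ‖f‖_∞))^j (f(x)g(x))^(β−j). In particular the flatness seminorm of fg is at most 2^(β−1)(κ_f ‖g‖_∞ + κ_g ‖f‖_∞). -/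
open Set

lemma aux_two_pow (a b p : ℝ) (ha : 0 ≤ a) (hb : 0 ≤ b) (hp : 1 ≤ p) :
    (a + b) ^ p ≤ 2 ^ (p - 1) * (a ^ p + b ^ p) := by
  have h := NNReal.rpow_add_le_mul_rpow_add_rpow a.toNNReal b.toNNReal hp
  have h2 := NNReal.coe_le_coe.2 h
  push_cast [NNReal.coe_rpow, Real.coe_toNNReal a ha, Real.coe_toNNReal b hb] at h2
  exact h2

lemma aux_root (β : ℝ) (hβ : 1 < β) (n : ℕ) (f : ℝ → ℝ) (κ : ℝ) (hκ : 0 ≤ κ)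
    (hf0 : ∀ x ∈ Icc (0:ℝ) 1, 0 ≤ f x)
    (hflat : ∀ x ∈ Icc (0:ℝ) 1, ∀ j : ℕ, 1 ≤ j → j ≤ n →
      |iteratedDerivWithin j f (Icc (0:ℝ) 1) x| ^ β ≤ κ ^ j * f x ^ (β - (j : ℝ))) :
    ∀ x ∈ Icc (0:ℝ) 1, ∀ i : ℕ, i ≤ n →
      |iteratedDerivWithin i f (Icc (0:ℝ) 1) x| ≤ κ ^ ((i:ℝ)/β) * f x ^ ((β - (i:ℝ))/β) := by
  intro x hx i hi
  have hβ0 : (0:ℝ) < β := lt_trans one_pos hβ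
  rcases Nat.eq_zero_or_pos i with h0 | h1
  · subst h0
    simp only [iteratedDerivWithin_zero, Nat.cast_zero, sub_zero, zero_div, Real.rpow_zero,
      one_mul, div_self hβ0.ne']
    rw [abs_of_nonneg (hf0 x hx), Real.rpow_one]
  · have h := hflat x hx i h1 hi
    have hD : 0 ≤ |iteratedDerivWithin i f (Icc (0:ℝ) 1) x| := abs_nonneg _
    calc |iteratedDerivWithin i f (Icc (0:ℝ) 1) x|
        = (|iteratedDerivWithin i f (Icc (0:ℝ) 1) x| ^ β) ^ β⁻¹ :=
          (Real.rpow_rpow_inv hD hβ0.ne').symm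
      _ ≤ (κ ^ i * f x ^ (β - (i:ℝ))) ^ β⁻¹ :=
          Real.rpow_le_rpow (Real.rpow_nonneg hD β) h (by positivity)
      _ = κ ^ ((i:ℝ)/β) * f x ^ ((β - (i:ℝ))/β) := by
          rw [Real.mul_rpow (pow_nonneg hκ i) (Real.rpow_nonneg (hf0 x hx) _),
            ← Real.rpow_natCast κ i, ← Real.rpow_mul hκ, ← Real.rpow_mul (hf0 x hx)]
          rw [div_eq_mul_inv, div_eq_mul_inv]

/-- The flatness seminorm of a product: if `f` and `g` satisfy the flatness condition with
constants `κ_f`, `κ_g`, then `f·g` satisfies it with constant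
`2^(β-1) (κ_f ‖g‖_∞ + κ_g ‖f‖_∞)`. -/
theorem flatness_seminorm_mul
    (β : ℝ) (hβ : 1 < β) (n : ℕ) (hn : (n : ℝ) < β) (hn' : β ≤ n + 1)
    (f g : ℝ → ℝ) (κf κg : ℝ) (hκf : 0 ≤ κf) (hκg : 0 ≤ κg)
    (hf0 : ∀ x ∈ Icc (0:ℝ) 1, 0 ≤ f x) (hg0 : ∀ x ∈ Icc (0:ℝ) 1, 0 ≤ g x)
    (hfsmooth : ContDiffOn ℝ n f (Icc (0:ℝ) 1))
    (hgsmooth : ContDiffOn ℝ n g (Icc (0:ℝ) 1))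
    (hfflat : ∀ x ∈ Icc (0:ℝ) 1, ∀ j : ℕ, 1 ≤ j → j ≤ n →
      |iteratedDerivWithin j f (Icc (0:ℝ) 1) x| ^ β ≤ κf ^ j * f x ^ (β - (j : ℝ)))
    (hgflat : ∀ x ∈ Icc (0:ℝ) 1, ∀ j : ℕ, 1 ≤ j → j ≤ n →
      |iteratedDerivWithin j g (Icc (0:ℝ) 1) x| ^ β ≤ κg ^ j * g x ^ (β - (j : ℝ))) :
    ∀ x ∈ Icc (0:ℝ) 1, ∀ j : ℕ, 1 ≤ j → j ≤ n →
      |iteratedDerivWithin j (fun t => f t * g t) (Icc (0:ℝ) 1) x| ^ β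
        ≤ (2 ^ (β - 1) * (κf * (⨆ t : Icc (0:ℝ) 1, g t) + κg * (⨆ t : Icc (0:ℝ) 1, f t))) ^ j
          * (f x * g x) ^ (β - (j : ℝ)) := by
  intro x hx j hj1 hjn
  have hβ0 : (0:ℝ) < β := lt_trans one_pos hβ
  have hs : UniqueDiffOn ℝ (Icc (0:ℝ) 1) := uniqueDiffOn_Icc zero_lt_one
  have hβj : (j:ℝ) < β := lt_of_le_of_lt (by exact_mod_cast hjn) hn
  have hβj' : (0:ℝ) < β - j := sub_pos.2 hβj
  set Mf : ℝ := ⨆ t : Icc (0:ℝ) 1, f t with hMfdef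
  set Mg : ℝ := ⨆ t : Icc (0:ℝ) 1, g t with hMgdef
  have himf : f '' Icc (0:ℝ) 1 = range fun t : Icc (0:ℝ) 1 => f t := Set.image_eq_range f _
  have himg : g '' Icc (0:ℝ) 1 = range fun t : Icc (0:ℝ) 1 => g t := Set.image_eq_range g _
  have bddf : BddAbove (range fun t : Icc (0:ℝ) 1 => f t) := by
    rw [← himf]; exact (isCompact_Icc.image_of_continuousOn hfsmooth.continuousOn).bddAbove
  have bddg : BddAbove (range fun t : Icc (0:ℝ) 1 => g t) := by
    rw [← himg]; exact (isCompact_Icc.image_of_continuousOn hgsmooth.continuousOn).bddAbove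
  have hfM : ∀ t ∈ Icc (0:ℝ) 1, f t ≤ Mf := fun t ht => le_ciSup bddf ⟨t, ht⟩
  have hgM : ∀ t ∈ Icc (0:ℝ) 1, g t ≤ Mg := fun t ht => le_ciSup bddg ⟨t, ht⟩
  have h01 : (0:ℝ) ∈ Icc (0:ℝ) 1 := ⟨le_refl _, zero_le_one⟩
  have hMf0 : 0 ≤ Mf := le_trans (hf0 0 h01) (hfM 0 h01)
  have hMg0 : 0 ≤ Mg := le_trans (hg0 0 h01) (hgM 0 h01)
  have hfx : 0 ≤ f x := hf0 x hx
  have hgx : 0 ≤ g x := hg0 x hx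
  have hA0 : 0 ≤ κf * Mg := mul_nonneg hκf hMg0
  have hB0 : 0 ≤ κg * Mf := mul_nonneg hκg hMf0
  set a : ℝ := (κf * Mg) ^ β⁻¹ with hadef
  set b : ℝ := (κg * Mf) ^ β⁻¹ with hbdef
  have ha0 : 0 ≤ a := Real.rpow_nonneg hA0 _
  have hb0 : 0 ≤ b := Real.rpow_nonneg hB0 _
  -- Leibniz
  have hjN : (j : WithTop ℕ∞) ≤ (n : WithTop ℕ∞) := by exact_mod_cast hjn
  have hle := norm_iteratedFDerivWithin_mul_le hfsmooth hgsmooth hs hx hjN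
  simp only [norm_iteratedFDerivWithin_eq_norm_iteratedDerivWithin, Real.norm_eq_abs] at hle
  -- termwise bound
  have key : ∑ i ∈ Finset.range (j + 1),
      (j.choose i : ℝ) * |iteratedDerivWithin i f (Icc (0:ℝ) 1) x| *
        |iteratedDerivWithin (j - i) g (Icc (0:ℝ) 1) x|
      ≤ (f x * g x) ^ ((β - j)/β) * (a + b) ^ j := by
    have hterm : ∀ i ∈ Finset.range (j + 1),
        (j.choose i : ℝ) * |iteratedDerivWithin i f (Icc (0:ℝ) 1) x| *
          |iteratedDerivWithin (j - i) g (Icc (0:ℝ) 1) x|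
        ≤ (f x * g x) ^ ((β - j)/β) * (a ^ i * b ^ (j - i) * (j.choose i : ℝ)) := by
      intro i hi
      have hij : i ≤ j := Finset.mem_range_succ_iff.mp hi
      have hcast : ((j - i : ℕ) : ℝ) = (j:ℝ) - i := by
        rw [Nat.cast_sub hij]
      have hji : (0:ℝ) ≤ (j:ℝ) - i := by
        rw [← hcast]; positivity
      have hif := aux_root β hβ n f κf hκf hf0 hfflat x hx i (le_trans hij hjn)
      have hig := aux_root β hβ n g κg hκg hg0 hgflat x hx (j - i)
        (le_trans (Nat.sub_le j i) hjn)
      rw [hcast] at hig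
      -- split exponents
      have hefx : f x ^ ((β - (i:ℝ))/β) = f x ^ ((β - j)/β) * f x ^ (((j:ℝ) - i)/β) := by
        have hne : (β - j)/β + ((j:ℝ) - i)/β ≠ 0 :=
          ne_of_gt (add_pos_of_pos_of_nonneg (div_pos hβj' hβ0) (div_nonneg hji hβ0.le))
        have he : (β - (i:ℝ))/β = (β - j)/β + ((j:ℝ) - i)/β := by ring
        rw [he, Real.rpow_add' hfx hne]
      have hegx : g x ^ ((β - ((j:ℝ) - i))/β) = g x ^ ((β - j)/β) * g x ^ ((i:ℝ)/β) := by
        have hne : (β - j)/β + (i:ℝ)/β ≠ 0 :=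
          ne_of_gt (add_pos_of_pos_of_nonneg (div_pos hβj' hβ0) (by positivity))
        have he : (β - ((j:ℝ) - i))/β = (β - j)/β + (i:ℝ)/β := by ring
        rw [he, Real.rpow_add' hgx hne]
      have F1 : |iteratedDerivWithin i f (Icc (0:ℝ) 1) x| ≤
          κf ^ ((i:ℝ)/β) * (f x ^ ((β - j)/β) * Mf ^ (((j:ℝ) - i)/β)) := by
        refine hif.trans (mul_le_mul_of_nonneg_left ?_ (Real.rpow_nonneg hκf _))
        rw [hefx]
        exact mul_le_mul_of_nonneg_left
          (Real.rpow_le_rpow hfx (hfM x hx) (by positivity)) (Real.rpow_nonneg hfx _)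
      have F2 : |iteratedDerivWithin (j - i) g (Icc (0:ℝ) 1) x| ≤
          κg ^ (((j:ℝ) - i)/β) * (g x ^ ((β - j)/β) * Mg ^ ((i:ℝ)/β)) := by
        refine hig.trans (mul_le_mul_of_nonneg_left ?_ (Real.rpow_nonneg hκg _))
        rw [hegx]
        exact mul_le_mul_of_nonneg_left
          (Real.rpow_le_rpow hgx (hgM x hx) (by positivity)) (Real.rpow_nonneg hgx _)
      calc (j.choose i : ℝ) * |iteratedDerivWithin i f (Icc (0:ℝ) 1) x| *
            |iteratedDerivWithin (j - i) g (Icc (0:ℝ) 1) x|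
          ≤ (j.choose i : ℝ) * (κf ^ ((i:ℝ)/β) * (f x ^ ((β - j)/β) * Mf ^ (((j:ℝ) - i)/β))) *
            (κg ^ (((j:ℝ) - i)/β) * (g x ^ ((β - j)/β) * Mg ^ ((i:ℝ)/β))) := by
            have h1 := mul_le_mul_of_nonneg_left F1 (by positivity : (0:ℝ) ≤ (j.choose i : ℝ))
            exact mul_le_mul h1 F2 (abs_nonneg _) (by positivity)
        _ = (f x * g x) ^ ((β - j)/β) * (a ^ i * b ^ (j - i) * (j.choose i : ℝ)) := by
            have hai : a ^ i = κf ^ ((i:ℝ)/β) * Mg ^ ((i:ℝ)/β) := by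
              rw [hadef, ← Real.rpow_natCast ((κf * Mg) ^ β⁻¹) i, ← Real.rpow_mul hA0,
                ← Real.mul_rpow hκf hMg0]
              congr 1
              rw [inv_mul_eq_div]
            have hbi : b ^ (j - i) = κg ^ (((j:ℝ) - i)/β) * Mf ^ (((j:ℝ) - i)/β) := by
              rw [hbdef, ← Real.rpow_natCast ((κg * Mf) ^ β⁻¹) (j - i), ← Real.rpow_mul hB0,
                ← Real.mul_rpow hκg hMf0, hcast]
              congr 1
              rw [inv_mul_eq_div]
            rw [hai, hbi, Real.mul_rpow hfx hgx]
            ring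

    calc ∑ i ∈ Finset.range (j + 1),
        (j.choose i : ℝ) * |iteratedDerivWithin i f (Icc (0:ℝ) 1) x| *
          |iteratedDerivWithin (j - i) g (Icc (0:ℝ) 1) x|
        ≤ ∑ i ∈ Finset.range (j + 1),
          (f x * g x) ^ ((β - j)/β) * (a ^ i * b ^ (j - i) * (j.choose i : ℝ)) :=
          Finset.sum_le_sum hterm
      _ = (f x * g x) ^ ((β - j)/β) * (a + b) ^ j := by
          rw [← Finset.mul_sum, add_pow]
  -- raise to power β
  have habs : 0 ≤ |iteratedDerivWithin j (fun t => f t * g t) (Icc (0:ℝ) 1) x| := abs_nonneg _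
  have hfin := Real.rpow_le_rpow habs (hle.trans key) hβ0.le
  have hfg : 0 ≤ (f x * g x) ^ ((β - j)/β) := Real.rpow_nonneg (mul_nonneg hfx hgx) _
  have hab : 0 ≤ a + b := add_nonneg ha0 hb0
  have hr1 : ((f x * g x) ^ ((β - j)/β) * (a + b) ^ j) ^ β
      = (f x * g x) ^ (β - (j:ℝ)) * ((a + b) ^ β) ^ j := by
    rw [Real.mul_rpow hfg (pow_nonneg hab j), ← Real.rpow_natCast (a + b) j,
      ← Real.rpow_mul hab, ← Real.rpow_mul (mul_nonneg hfx hgx),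
      div_mul_cancel₀ _ hβ0.ne', mul_comm (j:ℝ) β, Real.rpow_mul hab,
      Real.rpow_natCast]
  have hr2 : (a + b) ^ β ≤ 2 ^ (β - 1) * (κf * Mg + κg * Mf) := by
    have := aux_two_pow a b β ha0 hb0 hβ.le
    rwa [hadef, hbdef, Real.rpow_inv_rpow hA0 hβ0.ne', Real.rpow_inv_rpow hB0 hβ0.ne'] at this
  have hr3 : ((a + b) ^ β) ^ j ≤ (2 ^ (β - 1) * (κf * Mg + κg * Mf)) ^ j :=
    pow_le_pow_left₀ (Real.rpow_nonneg hab β) hr2 j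
  calc |iteratedDerivWithin j (fun t => f t * g t) (Icc (0:ℝ) 1) x| ^ β
      ≤ ((f x * g x) ^ ((β - j)/β) * (a + b) ^ j) ^ β := hfin
    _ = (f x * g x) ^ (β - (j:ℝ)) * ((a + b) ^ β) ^ j := hr1
    _ ≤ (f x * g x) ^ (β - (j:ℝ)) * (2 ^ (β - 1) * (κf * Mg + κg * Mf)) ^ j :=
        mul_le_mul_of_nonneg_left hr3 (Real.rpow_nonneg (mul_nonneg hfx hgx) _)
    _ = (2 ^ (β - 1) * (κf * Mg + κg * Mf)) ^ j * (f x * g x) ^ (β - (j:ℝ)) := mul_comm _ _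
end

section
/- Let β > 1 and let f : [0,1] → [0,∞) be ⌊β⌋-times differentiable with flatness constant κ, i.e. |f^(j)(x)|^β ≤ κ^j f(x)^(β−j) for all x ∈ [0,1] and 1 ≤ j ≤ ⌊β⌋. If inf_{x∈[0,1]} f(x) = 0 and f is continuous with continuous derivatives up to order ⌊β⌋, then κ ≥ ‖f‖_∞. -/
open Set

/-- If `f ∈ H^β` with `β > 1` has infimum zero on `[0,1]`, then the flatness constant
dominates the sup-norm: `κ ≥ ‖f‖_∞`. -/
theorem flatness_const_ge_sup_of_inf_zero
    (β : ℝ) (hβ : 1 < β) (n : ℕ) (hn : (n : ℝ) < β) (hn' : β ≤ n + 1)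
    (f : ℝ → ℝ) (κ : ℝ) (hκ : 0 ≤ κ)
    (hf0 : ∀ x ∈ Icc (0:ℝ) 1, 0 ≤ f x)
    (hsmooth : ContDiffOn ℝ n f (Icc (0:ℝ) 1))
    (hflat : ∀ x ∈ Icc (0:ℝ) 1, ∀ j : ℕ, 1 ≤ j → j ≤ n →
      |iteratedDerivWithin j f (Icc (0:ℝ) 1) x| ^ β ≤ κ ^ j * f x ^ (β - (j : ℝ)))
    (hinf : (⨅ t : Icc (0:ℝ) 1, f t) = 0) :
    (⨆ t : Icc (0:ℝ) 1, f t) ≤ κ := by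
  have hn1 : 1 ≤ n := by
    by_contra h
    push_neg at h
    interval_cases n <;> simp_all <;> linarith
  have hcont : ContinuousOn f (Icc (0:ℝ) 1) := hsmooth.continuousOn
  have hne : (Icc (0:ℝ) 1).Nonempty := ⟨0, by norm_num⟩
  obtain ⟨x₀, hx₀, hmin⟩ := isCompact_Icc.exists_isMinOn hne hcont
  obtain ⟨x₁, hx₁, hmax⟩ := isCompact_Icc.exists_isMaxOn hne hcont
  have hfx₀ : f x₀ = 0 := by
    have h1 : f x₀ ≤ ⨅ t : Icc (0:ℝ) 1, f t := le_ciInf fun t => hmin t.2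
    rw [hinf] at h1
    exact le_antisymm h1 (hf0 x₀ hx₀)
  have hsup_le : (⨆ t : Icc (0:ℝ) 1, f t) ≤ f x₁ := ciSup_le fun t => hmax t.2
  refine hsup_le.trans ?_
  set M := f x₁ with hM
  rcases eq_or_lt_of_le (hf0 x₁ hx₁) with h0 | hMpos
  · rw [hM, ← h0]; exact hκ
  have hderiv : ∀ x ∈ Ioo (0:ℝ) 1, HasDerivAt f (derivWithin f (Icc (0:ℝ) 1) x) x := by
    intro x hx
    have hd : DifferentiableWithinAt ℝ f (Icc (0:ℝ) 1) x :=
      (hsmooth.differentiableOn (by exact_mod_cast (Nat.one_le_iff_ne_zero.mp hn1))) x (Ioo_subset_Icc_self hx)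
    exact hd.hasDerivWithinAt.hasDerivAt (Icc_mem_nhds hx.1 hx.2)
  -- key computation from flatness at a point ξ where M ≤ |f' ξ|
  have key : ∀ ξ ∈ Icc (0:ℝ) 1, M ≤ |derivWithin f (Icc (0:ℝ) 1) ξ| → M ≤ κ := by
    intro ξ hξ hMle
    have h1 := hflat ξ hξ 1 le_rfl hn1
    rw [iteratedDerivWithin_one, pow_one] at h1
    have hMβ : M ^ β ≤ |derivWithin f (Icc (0:ℝ) 1) ξ| ^ β :=
      Real.rpow_le_rpow hMpos.le hMle (by linarith)
    have hfξ : f ξ ^ (β - (1:ℕ)) ≤ M ^ (β - 1) := by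
      push_cast
      exact Real.rpow_le_rpow (hf0 ξ hξ) (hmax hξ) (by linarith)
    have h2 : M ^ β ≤ κ * M ^ (β - 1) := by
      calc M ^ β ≤ κ * f ξ ^ (β - (1:ℕ)) := hMβ.trans h1
        _ ≤ κ * M ^ (β - 1) := by
            exact mul_le_mul_of_nonneg_left hfξ hκ
    have hMβ1pos : 0 < M ^ (β - 1) := Real.rpow_pos_of_pos hMpos _
    have hsplit : M ^ β = M * M ^ (β - 1) := by
      have h3 := Real.rpow_add hMpos 1 (β - 1)
      rw [Real.rpow_one, show (1:ℝ) + (β - 1) = β by ring] at h3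
      exact h3
    rw [hsplit] at h2
    exact le_of_mul_le_mul_right (by linarith [h2]) hMβ1pos
  -- MVT between x₀ and x₁
  rcases lt_trichotomy x₀ x₁ with hlt | heq | hgt
  · obtain ⟨ξ, hξ, hξd⟩ := exists_hasDerivAt_eq_slope f _ hlt
      (hcont.mono (Icc_subset_Icc hx₀.1 hx₁.2))
      (fun x hx => hderiv x ⟨lt_of_le_of_lt hx₀.1 hx.1, lt_of_lt_of_le hx.2 hx₁.2⟩)
    have hξ' : ξ ∈ Icc (0:ℝ) 1 :=
      ⟨le_of_lt (lt_of_le_of_lt hx₀.1 hξ.1), le_of_lt (lt_of_lt_of_le hξ.2 hx₁.2)⟩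
    refine key ξ hξ' ?_
    rw [hξd, hfx₀, sub_zero]
    rw [abs_div]
    rw [abs_of_pos hMpos, abs_of_pos (by linarith : (0:ℝ) < x₁ - x₀)]
    rw [le_div_iff₀ (by linarith)]
    nlinarith [hx₀.1, hx₁.2, hMpos]
  · exfalso; rw [heq, ← hM] at hfx₀; linarith
  · obtain ⟨ξ, hξ, hξd⟩ := exists_hasDerivAt_eq_slope f _ hgt
      (hcont.mono (Icc_subset_Icc hx₁.1 hx₀.2))
      (fun x hx => hderiv x ⟨lt_of_le_of_lt hx₁.1 hx.1, lt_of_lt_of_le hx.2 hx₀.2⟩)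
    have hξ' : ξ ∈ Icc (0:ℝ) 1 :=
      ⟨le_of_lt (lt_of_le_of_lt hx₁.1 hξ.1), le_of_lt (lt_of_lt_of_le hξ.2 hx₀.2)⟩
    refine key ξ hξ' ?_
    rw [hξd, hfx₀]
    rw [abs_div]
    rw [abs_of_neg (by rw [hM]; linarith : (0:ℝ) - M < 0), abs_of_pos (by linarith : (0:ℝ) < x₀ - x₁)]
    rw [le_div_iff₀ (by linarith)]
    nlinarith [hx₁.1, hx₀.2, hMpos]
end

section
/- Suppose f : ℝ → ℝ is nonnegative, differentiable, and its derivative f' satisfies |f'(x) − f'(y)| ≤ L|x−y|^(β−1) for all x, y ∈ ℝ, where β ∈ (1,2] and L > 0. Then |f'(x)| ≤ 2 L^(1/β) f(x)^((β−1)/β) for every x ∈ ℝ. -/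
/-- Glaeser-type differential inequality: if `f ≥ 0` on `ℝ` is differentiable with
`(β-1)`-Hölder derivative (constant `L`), `β ∈ (1,2]`, then
`|f'(x)| ≤ 2 L^(1/β) f(x)^((β-1)/β)` for all `x`. -/
theorem glaeser_differential_inequality
    (β L : ℝ) (hβ1 : 1 < β) (hβ2 : β ≤ 2) (hL : 0 < L)
    (f : ℝ → ℝ) (hf0 : ∀ x, 0 ≤ f x) (hdiff : Differentiable ℝ f)
    (hHol : ∀ x y, |deriv f x - deriv f y| ≤ L * |x - y| ^ (β - 1)) :
    ∀ x, |deriv f x| ≤ 2 * L ^ (1 / β) * f x ^ ((β - 1) / β) := by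
  have hβ0 : 0 < β := by linarith
  have hβ1' : 0 < β - 1 := by linarith
  have key : ∀ x h : ℝ, 0 < h → |deriv f x| ≤ f x / h + L * h ^ (β - 1) := by
    intro x h hh
    have habs : ∀ c : ℝ, |x - c| ≤ h → |deriv f x - deriv f c| ≤ L * h ^ (β - 1) := by
      intro c hc
      refine (hHol x c).trans ?_
      have : |x - c| ^ (β - 1) ≤ h ^ (β - 1) :=
        Real.rpow_le_rpow (abs_nonneg _) hc (le_of_lt hβ1')
      nlinarith
    rw [abs_le]
    constructor
    · -- lower bound via interval (x, x+h)
      obtain ⟨c, hc, hceq⟩ := exists_deriv_eq_slope f (by linarith : x < x + h)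
        (hdiff.continuous.continuousOn) (fun y _ => (hdiff y).differentiableWithinAt)
      have hcx : |x - c| ≤ h := by
        obtain ⟨h1, h2⟩ := hc; rw [abs_le]; constructor <;> linarith
      have h1 := abs_le.mp (habs c hcx)
      have h2 : deriv f c = (f (x + h) - f x) / h := by
        rw [hceq]; ring_nf
      have h4 : -(f x / h) ≤ deriv f c := by
        rw [h2, ← neg_div]
        gcongr
        linarith [hf0 (x + h)]
      linarith [h1.1, h1.2]
    · -- upper bound via interval (x-h, x)
      obtain ⟨c, hc, hceq⟩ := exists_deriv_eq_slope f (by linarith : x - h < x)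
        (hdiff.continuous.continuousOn) (fun y _ => (hdiff y).differentiableWithinAt)
      have hcx : |x - c| ≤ h := by
        obtain ⟨h1, h2⟩ := hc; rw [abs_le]; constructor <;> linarith
      have h1 := abs_le.mp (habs c hcx)
      have h2 : deriv f c = (f x - f (x - h)) / h := by
        rw [hceq]; ring_nf
      have h4 : deriv f c ≤ f x / h := by
        rw [h2]
        gcongr
        linarith [hf0 (x - h)]
      linarith [h1.1, h1.2]
  intro x
  rcases eq_or_lt_of_le (hf0 x) with hfx | hfx
  · -- f x = 0 : show deriv f x = 0
    have hd0 : deriv f x = 0 := by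
      by_contra hne
      have habspos : 0 < |deriv f x| := abs_pos.mpr hne
      set a := (|deriv f x| / (2 * L)) ^ (1 / (β - 1)) with ha
      have hapos : 0 < a := Real.rpow_pos_of_pos (by positivity) _
      have h1 := key x a hapos
      have h2 : a ^ (β - 1) = |deriv f x| / (2 * L) := by
        rw [ha, ← Real.rpow_mul (by positivity), one_div_mul_cancel (ne_of_gt hβ1'),
          Real.rpow_one]
      rw [← hfx] at h1
      rw [zero_div, zero_add, h2] at h1
      have : L * (|deriv f x| / (2 * L)) = |deriv f x| / 2 := by
        field_simp
      rw [this] at h1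
      linarith
    rw [hd0, ← hfx, abs_zero]
    have : (0 : ℝ) ^ ((β - 1) / β) = 0 := Real.zero_rpow (by positivity)
    rw [this]; simp
  · -- f x > 0 : optimize h
    set h := (f x / L) ^ (1 / β) with hhdef
    have hhpos : 0 < h := Real.rpow_pos_of_pos (by positivity) _
    have h1 := key x h hhpos
    have hsum : (β - 1) / β + 1 / β = 1 := by field_simp; ring
    have hfsplit : f x ^ ((β - 1) / β) * f x ^ (1 / β) = f x := by
      rw [← Real.rpow_add hfx, hsum, Real.rpow_one]
    have hLsplit : L ^ ((β - 1) / β) * L ^ (1 / β) = L := by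
      rw [← Real.rpow_add hL, hsum, Real.rpow_one]
    have hA : 0 < f x ^ ((β - 1) / β) := Real.rpow_pos_of_pos hfx _
    have hB : 0 < f x ^ (1 / β) := Real.rpow_pos_of_pos hfx _
    have hC : 0 < L ^ (1 / β) := Real.rpow_pos_of_pos hL _
    have hD : 0 < L ^ ((β - 1) / β) := Real.rpow_pos_of_pos hL _
    have e1 : f x / h = L ^ (1 / β) * f x ^ ((β - 1) / β) := by
      rw [hhdef, Real.div_rpow (le_of_lt hfx) (le_of_lt hL),
        div_div_eq_mul_div, div_eq_iff (ne_of_gt hB)]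
      rw [mul_assoc, hfsplit, mul_comm]
    have e2 : L * h ^ (β - 1) = L ^ (1 / β) * f x ^ ((β - 1) / β) := by
      have hm : 1 / β * (β - 1) = (β - 1) / β := by ring
      rw [hhdef, ← Real.rpow_mul (by positivity), hm,
        Real.div_rpow (le_of_lt hfx) (le_of_lt hL)]
      have hLdiv : L / L ^ ((β - 1) / β) = L ^ (1 / β) := by
        rw [div_eq_iff (ne_of_gt hD), mul_comm]
        exact hLsplit.symm
      rw [mul_div_assoc', mul_comm L, mul_div_assoc, hLdiv, mul_comm]
    rw [e1, e2] at h1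
    linarith
end

section
/- Let β ∈ (1,2] and let f : ℝ → [0,∞) be differentiable with |f'(x)−f'(y)| ≤ |x−y|^(β−1) for all x, y. Suppose that at some x ∈ ℝ one has f'(x) > 2 f(x)^((β−1)/β) with f(x) > 0. Then setting t = x − f(x)^(1/β), one has f'(y) ≥ f(x)^((β−1)/β) for all y ∈ [t, x], and consequently f(t) ≤ 0, so f(t) = 0, hence f'(t) = 0, contradicting f'(t) ≥ f(x)^((β−1)/β) > 0. Therefore no such x exists: f'(x) ≤ 2 f(x)^((β−1)/β) for all x with (by symmetry) |f'(x)| ≤ 2 f(x)^((β−1)/β). -/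
open Set

private lemma aux_one_sided (β : ℝ) (hβ1 : 1 < β)
    (f : ℝ → ℝ) (hf0 : ∀ x, 0 ≤ f x) (hdiff : Differentiable ℝ f)
    (hHol : ∀ x y, |deriv f x - deriv f y| ≤ |x - y| ^ (β - 1)) :
    ∀ x, deriv f x ≤ 2 * f x ^ ((β - 1) / β) := by
  intro x
  by_contra hcon
  push_neg at hcon
  have hβ0 : (0:ℝ) < β := by linarith
  have he : 0 < (β - 1) / β := div_pos (by linarith) hβ0
  have hfx : 0 < f x := by
    rcases (hf0 x).lt_or_eq with h' | h'
    · exact h'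
    · exfalso
      have hmin : IsLocalMin f x := Filter.Eventually.of_forall fun y => h' ▸ hf0 y
      have hd0 := hmin.deriv_eq_zero
      rw [hd0, ← h', Real.zero_rpow he.ne'] at hcon
      linarith
  set A := f x ^ ((β - 1) / β) with hA
  have hApos : 0 < A := Real.rpow_pos_of_pos hfx _
  set c := f x ^ (1 / β) with hc
  have hcpos : 0 < c := Real.rpow_pos_of_pos hfx _
  have hcA : c ^ (β - 1) = A := by
    rw [hc, hA, ← Real.rpow_mul (hf0 x)]
    congr 1
    field_simp
  have hcAfx : c * A = f x := by
    rw [hc, hA, ← Real.rpow_add hfx]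
    have : 1 / β + (β - 1) / β = 1 := by field_simp; ring
    rw [this, Real.rpow_one]
  set t := x - c with ht
  have htx : t < x := by simp only [ht]; linarith
  have hlow : ∀ y ∈ Icc t x, A ≤ deriv f y := by
    intro y hy
    have h1 : deriv f x - deriv f y ≤ |x - y| ^ (β - 1) :=
      (le_abs_self _).trans (hHol x y)
    have h2 : |x - y| ≤ c := by
      rw [abs_of_nonneg (by linarith [hy.2] : (0:ℝ) ≤ x - y)]
      have := hy.1
      simp only [ht] at this
      linarith
    have h3 : |x - y| ^ (β - 1) ≤ c ^ (β - 1) :=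
      Real.rpow_le_rpow (abs_nonneg _) h2 (by linarith)
    rw [hcA] at h3
    nlinarith
  obtain ⟨ξ, hξ, hslope⟩ :=
    exists_deriv_eq_slope f htx hdiff.continuous.continuousOn
      (hdiff.differentiableOn)
  have hξIcc : ξ ∈ Icc t x := ⟨hξ.1.le, hξ.2.le⟩
  have hAξ : A ≤ deriv f ξ := hlow ξ hξIcc
  have hxt : x - t = c := by simp [ht]
  rw [hslope, hxt] at hAξ
  have hft0 : f t ≤ 0 := by
    have : A * c ≤ f x - f t := by
      rw [le_div_iff₀ hcpos] at hAξ
      linarith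
    nlinarith
  have hft : f t = 0 := le_antisymm hft0 (hf0 t)
  have hmin : IsLocalMin f t := Filter.Eventually.of_forall fun y => hft ▸ hf0 y
  have hd0 := hmin.deriv_eq_zero
  have := hlow t ⟨le_refl t, htx.le⟩
  rw [hd0] at this
  linarith

/-- Key step for automatic flatness when `β ∈ (1,2]`: if `f ≥ 0` on `ℝ` is differentiable
with `(β-1)`-Hölder derivative of constant `1`, then `|f'(x)| ≤ 2 f(x)^((β-1)/β)` for all
`x`; no point can satisfy `f'(x) > 2 f(x)^((β-1)/β)`. -/
theorem no_large_derivative_point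
    (β : ℝ) (hβ1 : 1 < β) (hβ2 : β ≤ 2)
    (f : ℝ → ℝ) (hf0 : ∀ x, 0 ≤ f x) (hdiff : Differentiable ℝ f)
    (hHol : ∀ x y, |deriv f x - deriv f y| ≤ |x - y| ^ (β - 1)) :
    ∀ x, |deriv f x| ≤ 2 * f x ^ ((β - 1) / β) := by
  intro x
  have hub := aux_one_sided β hβ1 f hf0 hdiff hHol x
  set g : ℝ → ℝ := fun y => f (-y) with hg
  have hgdiff : Differentiable ℝ g := hdiff.comp differentiable_neg
  have hgderiv : ∀ y, deriv g y = -deriv f (-y) := by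
    intro y
    have h1 : HasDerivAt g (deriv f (-y) * (-1)) y :=
      (hdiff (-y)).hasDerivAt.comp y (hasDerivAt_neg y)
    simpa using h1.deriv
  have hgHol : ∀ a b, |deriv g a - deriv g b| ≤ |a - b| ^ (β - 1) := by
    intro a b
    rw [hgderiv, hgderiv]
    have := hHol (-b) (-a)
    calc |-deriv f (-a) - -deriv f (-b)| = |deriv f (-b) - deriv f (-a)| := by
          rw [show -deriv f (-a) - -deriv f (-b) = -(deriv f (-a) - deriv f (-b)) by ring,
            abs_neg, abs_sub_comm]
      _ ≤ |(-b) - (-a)| ^ (β - 1) := this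
      _ = |a - b| ^ (β - 1) := by rw [show (-b) - (-a) = -(b - a) by ring, abs_neg, abs_sub_comm]
  have hlb := aux_one_sided β hβ1 g (fun y => hf0 (-y)) hgdiff hgHol (-x)
  rw [hgderiv] at hlb
  simp only [hg, neg_neg] at hlb
  rw [abs_le]
  constructor
  · linarith
  · exact hub
end

section
/- Let β > 0, let f : [0,1] → [0,∞) satisfy the flatness condition with ‖f‖_{H^β} = 1 (i.e. |f^(j)(x)|^β ≤ f(x)^(β−j) for 1 ≤ j ≤ ⌊β⌋, and the ⌊β⌋-th derivative is (β−⌊β⌋)-Hölder with constant ≤ 1). Let a > 0 satisfy (e^a − 1) + a^β/⌊β⌋! ≤ 1/2. Then for all x ∈ [0,1] and all h with x + h ∈ [0,1] and |h| ≤ a·f(x)^(1/β), one has |f(x+h) − f(x)| ≤ f(x)/2, and in particular f(x)/2 ≤ f(x+h) ≤ 3f(x)/2. -/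
open Set


lemma poly_hasDerivAt (c : ℕ → ℝ) (x t : ℝ) (n : ℕ) :
    HasDerivAt (fun t => ∑ j ∈ Finset.range (n+1), c j * (t - x)^j / j.factorial)
      (∑ j ∈ Finset.range n, c (j+1) * (t - x)^j / j.factorial) t := by
  have H : ∀ j : ℕ, HasDerivAt (fun t => c j * (t - x)^j / j.factorial)
      (c j * (j * (t - x)^(j-1)) / j.factorial) t := by
    intro j
    simpa [div_eq_mul_inv, mul_comm, mul_assoc, mul_left_comm] using
      (((hasDerivAt_id t).sub_const x).pow j).const_mul (c j / j.factorial)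
  have h2 : HasDerivAt (fun t => ∑ j ∈ Finset.range (n+1), c j * (t - x)^j / j.factorial)
      (∑ j ∈ Finset.range (n+1), c j * (j * (t - x)^(j-1)) / j.factorial) t :=
    HasDerivAt.fun_sum (fun j _ => H j)
  convert h2 using 1
  rw [Finset.sum_range_succ']
  simp only [Nat.cast_zero, zero_mul, mul_zero, zero_div, add_zero]
  apply Finset.sum_congr rfl
  intro j _
  have hj : ((j:ℝ)+1) ≠ 0 := by positivity
  have hf : (j.factorial:ℝ) ≠ 0 := by positivity
  simp only [Nat.factorial_succ, Nat.add_sub_cancel, Nat.cast_mul, Nat.cast_add, Nat.cast_one]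
  field_simp

lemma taylor_holder (α : ℝ) (hα0 : 0 < α) :
    ∀ (n : ℕ) (f : ℝ → ℝ), ContDiffOn ℝ n f (Icc (0:ℝ) 1) →
    (∀ u ∈ Icc (0:ℝ) 1, ∀ v ∈ Icc (0:ℝ) 1,
      |iteratedDerivWithin n f (Icc (0:ℝ) 1) u - iteratedDerivWithin n f (Icc (0:ℝ) 1) v|
        ≤ |u - v| ^ α) →
    ∀ x ∈ Icc (0:ℝ) 1, ∀ y ∈ Icc (0:ℝ) 1,
    |f y - ∑ j ∈ Finset.range (n+1),
        iteratedDerivWithin j f (Icc (0:ℝ) 1) x * (y - x)^j / j.factorial|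
      ≤ |y - x| ^ ((n:ℝ) + α) / n.factorial := by
  intro n
  induction n with
  | zero =>
    intro f _ hHol x hx y hy
    simpa [iteratedDerivWithin_zero, abs_sub_comm] using hHol y hy x hx
  | succ n IH =>
    intro f hsmooth hHol x hx y hy
    set s : Set ℝ := Icc (0:ℝ) 1 with hs
    have hus : UniqueDiffOn ℝ s := uniqueDiffOn_Icc (by norm_num)
    set f' : ℝ → ℝ := derivWithin f s with hf'def
    have hf' : ContDiffOn ℝ n f' s := by
      apply hsmooth.derivWithin hus
      push_cast
      exact le_rfl
    have hiter : ∀ j : ℕ, ∀ u ∈ s, iteratedDerivWithin (j+1) f s u = iteratedDerivWithin j f' s u :=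
      fun j u hu => congrFun iteratedDerivWithin_succ' u
    have hHol' : ∀ u ∈ s, ∀ v ∈ s,
        |iteratedDerivWithin n f' s u - iteratedDerivWithin n f' s v| ≤ |u - v| ^ α := by
      intro u hu v hv
      rw [← hiter n u hu, ← hiter n v hv]
      exact hHol u hu v hv
    have IH' := IH f' hf' hHol'
    set c : ℕ → ℝ := fun j => iteratedDerivWithin j f s x with hc
    set g : ℝ → ℝ := fun t => f t - ∑ j ∈ Finset.range (n+2), c j * (t - x)^j / j.factorial
      with hg
    set g' : ℝ → ℝ := fun t => f' t - ∑ j ∈ Finset.range (n+1), c (j+1) * (t - x)^j / j.factorial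
      with hg'
    have hgderiv : ∀ t ∈ s, HasDerivWithinAt g (g' t) s t := by
      intro t ht
      have h1 : HasDerivWithinAt f (f' t) s t :=
        ((hsmooth.differentiableOn (by simp)) t ht).hasDerivWithinAt
      exact h1.sub (poly_hasDerivAt c x t (n+1)).hasDerivWithinAt
    have hbound : ∀ t ∈ s, |g' t| ≤ |t - x| ^ ((n:ℝ) + α) / n.factorial := by
      intro t ht
      have := IH' x hx t ht
      have hcc : ∀ j ∈ Finset.range (n+1), iteratedDerivWithin j f' s x * (t - x)^j / j.factorial
          = c (j+1) * (t - x)^j / j.factorial := by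
        intro j _
        rw [← hiter j x hx]
      rw [Finset.sum_congr rfl hcc] at this
      simpa [hg', abs_sub_comm t x] using this
    -- continuity facts
    have hpolyc : ∀ m : ℕ, Continuous fun t : ℝ => ∑ j ∈ Finset.range m, c j * (t - x)^j / j.factorial := by
      intro m
      exact continuous_finset_sum _ fun j _ => (continuous_const.mul ((continuous_id.sub continuous_const).pow j)).div_const _
    have hpolyc' : Continuous fun t : ℝ => ∑ j ∈ Finset.range (n+1), c (j+1) * (t - x)^j / j.factorial :=
      continuous_finset_sum _ fun j _ => (continuous_const.mul ((continuous_id.sub continuous_const).pow j)).div_const _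
    have hcontg : ContinuousOn g s :=
      (hsmooth.continuousOn).sub (hpolyc (n+2)).continuousOn
    have hcontg' : ContinuousOn g' s :=
      (hf'.continuousOn).sub hpolyc'.continuousOn
    have husub : uIcc x y ⊆ s := uIcc_subset_Icc hx hy
    have hIccsub : ∀ t ∈ Ioo (min x y) (max x y), t ∈ Ioo (0:ℝ) 1 := by
      intro t ht
      constructor
      · exact lt_of_le_of_lt (le_min hx.1 hy.1) ht.1
      · exact lt_of_lt_of_le ht.2 (max_le hx.2 hy.2)
    have hFTC : ∫ t in x..y, g' t = g y - g x := by
      apply intervalIntegral.integral_eq_sub_of_hasDeriv_right (hcontg.mono husub)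
      · intro t ht
        have ht01 := hIccsub t ht
        have hts : t ∈ s := Ioo_subset_Icc_self ht01
        exact ((hgderiv t hts).hasDerivAt (Icc_mem_nhds ht01.1 ht01.2)).hasDerivWithinAt
      · exact (hcontg'.mono husub).intervalIntegrable
    have hgx : g x = 0 := by
      have hsum : ∑ j ∈ Finset.range (n+2), c j * (x - x)^j / j.factorial = c 0 := by
        rw [Finset.sum_eq_single 0]
        · simp
        · intro j _ hj
          simp [sub_self, zero_pow hj]
        · intro h
          exact absurd (Finset.mem_range.mpr (Nat.succ_pos _)) h
      have h2 : g x = f x - ∑ j ∈ Finset.range (n+2), c j * (x - x)^j / j.factorial := rfl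
      rw [h2, hsum]
      have h3 : c 0 = f x := by rw [hc]; simp [iteratedDerivWithin_zero]
      rw [h3, sub_self]
    set q : ℝ := (n:ℝ) + α with hqdef
    have hq0 : 0 < q := by positivity
    have hnf : (0:ℝ) < n.factorial := by positivity
    have hBcont : Continuous fun t : ℝ => |t - x| ^ q / (n.factorial:ℝ) := by
      apply Continuous.div_const
      exact (continuous_id.sub continuous_const).abs.rpow_const fun t => Or.inr hq0.le
    have hq1 : q + 1 = ((n+1:ℕ):ℝ) + α := by push_cast; ring
    have hfact : ((n+1).factorial : ℝ) = (n+1) * n.factorial := by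
      rw [Nat.factorial_succ]; push_cast; ring
    have key : |g y| ≤ |y - x| ^ (((n+1:ℕ):ℝ) + α) / (n+1).factorial := by
      rcases le_total x y with hxy | hxy
      · have hmono : ∫ t in x..y, |g' t| ≤ ∫ t in x..y, |t - x| ^ q / n.factorial := by
          apply intervalIntegral.integral_mono_on hxy
          · exact ((hcontg'.mono husub).abs).intervalIntegrable
          · exact hBcont.continuousOn.intervalIntegrable
          · intro t ht
            exact hbound t ⟨le_trans hx.1 ht.1, le_trans ht.2 hy.2⟩
        have hcalc : ∫ t in x..y, |t - x| ^ q / n.factorial = (y-x)^(q+1) / (q+1) / n.factorial := by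
          rw [intervalIntegral.integral_div]
          congr 1
          have hEq : EqOn (fun t : ℝ => |t - x| ^ q) (fun t : ℝ => (t - x) ^ q) (uIcc x y) := by
            intro t ht
            rw [uIcc_of_le hxy] at ht
            simp only
            rw [abs_of_nonneg (by linarith [ht.1])]
          rw [intervalIntegral.integral_congr hEq,
            intervalIntegral.integral_comp_sub_right (fun u : ℝ => u ^ q) x, sub_self,
            integral_rpow (Or.inl (by linarith)), Real.zero_rpow (by positivity), sub_zero]
        calc |g y| = |∫ t in x..y, g' t| := by rw [hFTC, hgx, sub_zero]
          _ ≤ ∫ t in x..y, |g' t| := by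
              simpa [Real.norm_eq_abs] using
                intervalIntegral.norm_integral_le_integral_norm (f := g') (μ := MeasureTheory.volume) hxy
          _ ≤ (y-x)^(q+1) / (q+1) / n.factorial := by rw [← hcalc]; exact hmono
          _ ≤ |y - x| ^ (((n+1:ℕ):ℝ) + α) / (n+1).factorial := by
              rw [← hq1, abs_of_nonneg (by linarith : (0:ℝ) ≤ y - x), div_div, hfact]
              gcongr
              rw [hqdef]; linarith
      · have hmono : ∫ t in y..x, |g' t| ≤ ∫ t in y..x, |t - x| ^ q / n.factorial := by
          apply intervalIntegral.integral_mono_on hxy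
          · exact ((hcontg'.mono (uIcc_subset_Icc hy hx)).abs).intervalIntegrable
          · exact hBcont.continuousOn.intervalIntegrable
          · intro t ht
            exact hbound t ⟨le_trans hy.1 ht.1, le_trans ht.2 hx.2⟩
        have hcalc : ∫ t in y..x, |t - x| ^ q / n.factorial = (x-y)^(q+1) / (q+1) / n.factorial := by
          rw [intervalIntegral.integral_div]
          congr 1
          have hEq : EqOn (fun t : ℝ => |t - x| ^ q) (fun t : ℝ => (x - t) ^ q) (uIcc y x) := by
            intro t ht
            rw [uIcc_of_le hxy] at ht
            simp only
            rw [abs_sub_comm, abs_of_nonneg (by linarith [ht.2])]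
          rw [intervalIntegral.integral_congr hEq,
            intervalIntegral.integral_comp_sub_left (fun u : ℝ => u ^ q) x, sub_self,
            integral_rpow (Or.inl (by linarith)), Real.zero_rpow (by positivity), sub_zero]
        calc |g y| = |∫ t in y..x, g' t| := by
              rw [intervalIntegral.integral_symm, hFTC, hgx, sub_zero, abs_neg]
          _ ≤ ∫ t in y..x, |g' t| := by
              simpa [Real.norm_eq_abs] using
                intervalIntegral.norm_integral_le_integral_norm (f := g') (μ := MeasureTheory.volume) hxy
          _ ≤ (x-y)^(q+1) / (q+1) / n.factorial := by rw [← hcalc]; exact hmono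
          _ ≤ |y - x| ^ (((n+1:ℕ):ℝ) + α) / (n+1).factorial := by
              rw [← hq1, abs_sub_comm, abs_of_nonneg (by linarith : (0:ℝ) ≤ x - y), div_div, hfact]
              gcongr
              rw [hqdef]; linarith
    simpa [hg, hc] using key

/-- Local constancy of a flat function: if `‖f‖_{H^β} = 1` (normalized) and
`(e^a - 1) + a^β/⌊β⌋! ≤ 1/2`, then `|f(x+h) - f(x)| ≤ f(x)/2` whenever
`|h| ≤ a f(x)^(1/β)`. -/
theorem local_function_size
    (β a : ℝ) (hβ : 0 < β) (n : ℕ) (hn : (n : ℝ) < β) (hn' : β ≤ n + 1)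
    (ha : 0 < a) (haineq : (Real.exp a - 1) + a ^ β / (Nat.factorial n) ≤ 1 / 2)
    (f : ℝ → ℝ) (hf0 : ∀ x ∈ Icc (0:ℝ) 1, 0 ≤ f x)
    (hsmooth : ContDiffOn ℝ n f (Icc (0:ℝ) 1))
    (hflat : ∀ x ∈ Icc (0:ℝ) 1, ∀ j : ℕ, 1 ≤ j → j ≤ n →
      |iteratedDerivWithin j f (Icc (0:ℝ) 1) x| ^ β ≤ f x ^ (β - (j : ℝ)))
    (hHol : ∀ x ∈ Icc (0:ℝ) 1, ∀ y ∈ Icc (0:ℝ) 1,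
      |iteratedDerivWithin n f (Icc (0:ℝ) 1) x - iteratedDerivWithin n f (Icc (0:ℝ) 1) y|
        ≤ |x - y| ^ (β - (n : ℝ))) :
    ∀ x ∈ Icc (0:ℝ) 1, ∀ h : ℝ, x + h ∈ Icc (0:ℝ) 1 → |h| ≤ a * f x ^ (1 / β) →
      |f (x + h) - f x| ≤ f x / 2 ∧
      f x / 2 ≤ f (x + h) ∧ f (x + h) ≤ 3 * f x / 2 := by
  intro x hx h hxh hha
  have hmain : |f (x + h) - f x| ≤ f x / 2 := by
    rcases eq_or_lt_of_le (hf0 x hx) with hfx | hfx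
    · -- f x = 0 : then h = 0
      have hfz : f x = 0 := hfx.symm
      have h0 : |h| ≤ 0 := by
        rw [hfz, Real.zero_rpow (by positivity : 1/β ≠ 0), mul_zero] at hha
        exact hha
      have : h = 0 := abs_nonpos_iff.mp h0
      simp [this, hfz]
    · -- f x > 0
      have hT := taylor_holder (β - n) (by linarith) n f hsmooth hHol x hx (x + h) hxh
      rw [add_sub_cancel_left] at hT
      have hexp : (n:ℝ) + (β - n) = β := by ring
      rw [hexp] at hT
      set c : ℕ → ℝ := fun j => iteratedDerivWithin j f (Icc (0:ℝ) 1) x with hc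
      -- individual bounds
      have hfxnn : (0:ℝ) ≤ f x := hfx.le
      have hcj : ∀ j : ℕ, 1 ≤ j → j ≤ n → |c j| * |h| ^ j ≤ a ^ j * f x := by
        intro j hj1 hjn
        have e0 : |c j| ^ β ≤ f x ^ (β - (j:ℝ)) := hflat x hx j hj1 hjn
        have e1 : |c j| ≤ f x ^ ((β - (j:ℝ)) * (1/β)) := by
          have h2 := Real.rpow_le_rpow (by positivity) e0 (by positivity : (0:ℝ) ≤ 1/β)
          rw [← Real.rpow_mul hfxnn] at h2
          rwa [← Real.rpow_mul (abs_nonneg _), mul_one_div, div_self hβ.ne', Real.rpow_one] at h2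
        have e2 : |h| ^ j ≤ a ^ j * f x ^ ((1/β) * (j:ℝ)) := by
          calc |h| ^ j ≤ (a * f x ^ (1/β)) ^ j := pow_le_pow_left₀ (abs_nonneg h) hha j
            _ = a ^ j * (f x ^ (1/β)) ^ j := mul_pow _ _ j
            _ = a ^ j * f x ^ ((1/β) * (j:ℝ)) := by
                rw [← Real.rpow_natCast (f x ^ (1/β)) j, ← Real.rpow_mul hfxnn]
        calc |c j| * |h| ^ j
            ≤ f x ^ ((β - (j:ℝ)) * (1/β)) * (a ^ j * f x ^ ((1/β) * (j:ℝ))) :=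
              mul_le_mul e1 e2 (pow_nonneg (abs_nonneg h) j) (Real.rpow_nonneg hfxnn _)
          _ = a ^ j * (f x ^ ((β - (j:ℝ)) * (1/β)) * f x ^ ((1/β) * (j:ℝ))) := by ring
          _ = a ^ j * f x ^ ((β - (j:ℝ)) * (1/β) + (1/β) * (j:ℝ)) := by
              rw [← Real.rpow_add hfx]
          _ = a ^ j * f x := by
              rw [show (β - (j:ℝ)) * (1/β) + (1/β) * (j:ℝ) = 1 by field_simp; ring, Real.rpow_one]
      have hhb : |h| ^ β ≤ a ^ β * f x := by
        calc |h| ^ β ≤ (a * f x ^ (1/β)) ^ β :=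
              Real.rpow_le_rpow (abs_nonneg h) hha hβ.le
          _ = a ^ β * (f x ^ (1/β)) ^ β := Real.mul_rpow ha.le (Real.rpow_nonneg hfxnn _)
          _ = a ^ β * f x := by
              rw [← Real.rpow_mul hfxnn, one_div, inv_mul_cancel₀ hβ.ne', Real.rpow_one]
      -- split the Taylor sum
      have hsplit : ∑ j ∈ Finset.range (n + 1), c j * h ^ j / j.factorial
          = (∑ j ∈ Finset.range n, c (j+1) * h ^ (j+1) / (j+1).factorial) + f x := by
        rw [Finset.sum_range_succ']
        congr 1
        simp [hc, iteratedDerivWithin_zero]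
      have htail : |∑ j ∈ Finset.range n, c (j+1) * h ^ (j+1) / (j+1).factorial|
          ≤ f x * (Real.exp a - 1) := by
        calc |∑ j ∈ Finset.range n, c (j+1) * h ^ (j+1) / (j+1).factorial|
            ≤ ∑ j ∈ Finset.range n, |c (j+1) * h ^ (j+1) / (j+1).factorial| :=
              Finset.abs_sum_le_sum_abs _ _
          _ ≤ ∑ j ∈ Finset.range n, a ^ (j+1) * f x / (j+1).factorial := by
              apply Finset.sum_le_sum
              intro j hj
              rw [abs_div, abs_mul, abs_pow, Nat.abs_cast]
              apply div_le_div_of_nonneg_right ?_ (by positivity)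
              exact hcj (j+1) (Nat.succ_le_succ (Nat.zero_le j))
                (Nat.succ_le_of_lt (Finset.mem_range.mp hj))
          _ = f x * ∑ j ∈ Finset.range n, a ^ (j+1) / (j+1).factorial := by
              rw [Finset.mul_sum]
              apply Finset.sum_congr rfl
              intro j _
              ring
          _ ≤ f x * (Real.exp a - 1) := by
              apply mul_le_mul_of_nonneg_left ?_ hfxnn
              have hexp2 := Real.sum_le_exp_of_nonneg ha.le (n+1)
              rw [Finset.sum_range_succ'] at hexp2
              simp only [pow_zero, Nat.factorial_zero, Nat.cast_one] at hexp2
              have : ∀ j ∈ Finset.range n, a ^ (j+1) / ((j+1).factorial:ℝ)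
                  = a ^ (j+1) / ((j+1).factorial:ℝ) := fun _ _ => rfl
              linarith [hexp2]
      calc |f (x + h) - f x|
          ≤ |f (x + h) - ∑ j ∈ Finset.range (n + 1), c j * h ^ j / j.factorial|
            + |(∑ j ∈ Finset.range (n + 1), c j * h ^ j / j.factorial) - f x| :=
            abs_sub_le _ _ _
        _ ≤ |h| ^ β / n.factorial + f x * (Real.exp a - 1) := by
            apply add_le_add hT
            rw [hsplit, add_sub_cancel_right]
            exact htail
        _ ≤ a ^ β * f x / n.factorial + f x * (Real.exp a - 1) := by
            apply add_le_add_left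
            apply div_le_div_of_nonneg_right hhb (by positivity)
        _ = f x * ((Real.exp a - 1) + a ^ β / n.factorial) := by ring
        _ ≤ f x * (1/2) := mul_le_mul_of_nonneg_left haineq hfxnn
        _ = f x / 2 := by ring
  obtain ⟨h1, h2⟩ := abs_le.mp hmain
  exact ⟨hmain, by linarith, by linarith⟩
end

section
/- Let α ∈ (0,1], β > 0, and let f : [0,1] → [0,∞) be ⌊β⌋-times differentiable satisfying |f^(j)(x)|^β ≤ ‖f‖^j f(x)^(β−j) for all 1 ≤ j ≤ ⌊β⌋ and x ∈ [0,1], where ‖f‖ ≥ ‖f‖_∞ is a constant. Then there is a constant C depending only on α and β such that for every integer 0 ≤ k < β and every x ∈ [0,1] with f(x) > 0, |d^k/dx^k (f(x)^α)| ≤ C ‖f‖^(k/β) f(x)^(α − k/β). -/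
open Set

private lemma locality_iter (j : ℕ) (g : ℝ → ℝ) (s V : Set ℝ) (hV : IsOpen V) {y : ℝ}
    (hy : y ∈ V) :
    iteratedDerivWithin j g (s ∩ V) y = iteratedDerivWithin j g s y := by
  rw [iteratedDerivWithin_eq_iteratedFDerivWithin, iteratedDerivWithin_eq_iteratedFDerivWithin,
    iteratedFDerivWithin_inter_open hV hy]

private lemma aux_bound (β : ℝ) (hβ : 0 < β) (n : ℕ) :
    ∀ k : ℕ, k ≤ n → ∀ γ : ℝ, ∃ C : ℝ, 0 < C ∧
      ∀ (t : Set ℝ), UniqueDiffOn ℝ t → ∀ (f : ℝ → ℝ) (K : ℝ),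
        (∀ y ∈ t, 0 < f y) →
        ContDiffOn ℝ n f t →
        (∀ y ∈ t, f y ≤ K) →
        (∀ y ∈ t, ∀ j : ℕ, 1 ≤ j → j ≤ n →
          |iteratedDerivWithin j f t y| ≤ K ^ ((j : ℝ)/β) * f y ^ (1 - (j : ℝ)/β)) →
        ∀ x ∈ t, |iteratedDerivWithin k (fun y => f y ^ γ) t x|
          ≤ C * K ^ ((k : ℝ)/β) * f x ^ (γ - (k : ℝ)/β) := by
  intro k
  induction k using Nat.strong_induction_on with
  | _ k IH =>
  match k with
  | 0 =>
    intro _ γ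
    refine ⟨1, one_pos, fun t hu f K hpos hcd hK h4 x hx => ?_⟩
    have hfx := hpos x hx
    simp only [iteratedDerivWithin_zero, Nat.cast_zero, zero_div, Real.rpow_zero, sub_zero,
      one_mul, mul_one]
    rw [abs_of_nonneg (Real.rpow_nonneg hfx.le _)]
  | (m+1) =>
    intro hk γ
    have hmn : m ≤ n := Nat.le_of_succ_le hk
    have H : ∀ i : ℕ, ∃ C : ℝ, 0 < C ∧ ∀ _ : i ≤ m,
        ∀ (t : Set ℝ), UniqueDiffOn ℝ t → ∀ (f : ℝ → ℝ) (K : ℝ),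
        (∀ y ∈ t, 0 < f y) →
        ContDiffOn ℝ n f t →
        (∀ y ∈ t, f y ≤ K) →
        (∀ y ∈ t, ∀ j : ℕ, 1 ≤ j → j ≤ n →
          |iteratedDerivWithin j f t y| ≤ K ^ ((j : ℝ)/β) * f y ^ (1 - (j : ℝ)/β)) →
        ∀ x ∈ t, |iteratedDerivWithin i (fun y => f y ^ (γ - 1)) t x|
          ≤ C * K ^ ((i : ℝ)/β) * f x ^ ((γ - 1) - (i : ℝ)/β) := by
      intro i
      by_cases hi : i ≤ m
      · obtain ⟨C, hC, hb⟩ := IH i (Nat.lt_succ_of_le hi) (le_trans hi hmn) (γ - 1)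
        exact ⟨C, hC, fun _ => hb⟩
      · exact ⟨1, one_pos, fun h => absurd h hi⟩
    choose C₀ hC₀pos hC₀ using H
    have hSnn : 0 ≤ ∑ i ∈ Finset.range (m+1), (m.choose i : ℝ) * C₀ i :=
      Finset.sum_nonneg fun i _ => mul_nonneg (Nat.cast_nonneg _) (hC₀pos i).le
    set S : ℝ := ∑ i ∈ Finset.range (m+1), (m.choose i : ℝ) * C₀ i with hSdef
    refine ⟨|γ| * S + 1, by nlinarith [abs_nonneg γ], ?_⟩
    intro t hu f K hpos hcd hK h4 x hx
    have hfx := hpos x hx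
    have hK0 : 0 < K := lt_of_lt_of_le hfx (hK x hx)
    have hmn' : (m : WithTop ℕ∞) ≤ (n : WithTop ℕ∞) := by exact_mod_cast hmn
    have hm1n' : (m : WithTop ℕ∞) + 1 ≤ (n : WithTop ℕ∞) := by exact_mod_cast hk
    have hdiff : DifferentiableOn ℝ f t := hcd.differentiableOn (by
      exact_mod_cast (by omega : n ≠ 0))
    set u : ℝ → ℝ := fun y => f y ^ (γ - 1) with hudef
    set v : ℝ → ℝ := derivWithin f t with hvdef
    have hucd : ContDiffOn ℝ m u t :=
      (hcd.of_le hmn').rpow_const_of_ne (fun y hy => (hpos y hy).ne')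
    have hvcd : ContDiffOn ℝ m v t := hcd.derivWithin hu hm1n'
    have e1 : iteratedDerivWithin (m+1) (fun y => f y ^ γ) t x
        = iteratedDerivWithin m (derivWithin (fun y => f y ^ γ) t) t x :=
      congrFun iteratedDerivWithin_succ' x
    have e2 : EqOn (derivWithin (fun y => f y ^ γ) t) (fun y => γ * (u y * v y)) t := by
      intro y hy
      have hd : HasDerivWithinAt f (v y) t y := (hdiff y hy).hasDerivWithinAt
      have hD := hd.rpow_const (p := γ) (Or.inl (hpos y hy).ne')
      rw [hD.derivWithin (hu y hy)]
      simp only [hudef, hvdef]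
      ring
    have e3 : iteratedDerivWithin m (derivWithin (fun y => f y ^ γ) t) t x
        = iteratedDerivWithin m (fun y => γ * (u y * v y)) t x :=
      iteratedDerivWithin_congr e2 hx
    have e4 : iteratedDerivWithin m (fun y => γ * (u y * v y)) t x
        = γ * iteratedDerivWithin m (fun y => u y * v y) t x :=
      iteratedDerivWithin_const_mul hx hu γ ((hucd.mul hvcd) x hx)
    have hX0 : 0 < K ^ (((m : ℝ)+1)/β) * f x ^ (γ - ((m : ℝ)+1)/β) :=
      mul_pos (Real.rpow_pos_of_pos hK0 _) (Real.rpow_pos_of_pos hfx _)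
    have step : |iteratedDerivWithin m (fun y => u y * v y) t x|
        ≤ ∑ i ∈ Finset.range (m+1), (m.choose i : ℝ)
          * |iteratedDerivWithin i u t x| * |iteratedDerivWithin (m-i) v t x| := by
      have := norm_iteratedFDerivWithin_mul_le (𝕜 := ℝ) hucd hvcd hu hx
        (le_refl (m : WithTop ℕ∞))
      simpa [norm_iteratedFDerivWithin_eq_norm_iteratedDerivWithin, Real.norm_eq_abs] using this
    have termwise : ∀ i ∈ Finset.range (m+1),
        (m.choose i : ℝ) * |iteratedDerivWithin i u t x| * |iteratedDerivWithin (m-i) v t x|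
        ≤ ((m.choose i : ℝ) * C₀ i) * (K ^ (((m : ℝ)+1)/β) * f x ^ (γ - ((m : ℝ)+1)/β)) := by
      intro i hi
      have him : i ≤ m := Finset.mem_range_succ_iff.mp hi
      have hA := hC₀ i him t hu f K hpos hcd hK h4 x hx
      have eB : iteratedDerivWithin (m-i) v t x = iteratedDerivWithin (m-i+1) f t x :=
        (congrFun iteratedDerivWithin_succ' x).symm
      have hB : |iteratedDerivWithin (m-i) v t x|
          ≤ K ^ (((m-i+1 : ℕ) : ℝ)/β) * f x ^ (1 - ((m-i+1 : ℕ) : ℝ)/β) := by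
        rw [eB]; exact h4 x hx (m-i+1) (by omega) (by omega)
      have hsub : ((m - i + 1 : ℕ) : ℝ) = (m : ℝ) - i + 1 := by
        push_cast [Nat.cast_sub him]; ring
      have key : (C₀ i * K ^ ((i : ℝ)/β) * f x ^ ((γ-1) - (i : ℝ)/β))
            * (K ^ (((m-i+1 : ℕ) : ℝ)/β) * f x ^ (1 - ((m-i+1 : ℕ) : ℝ)/β))
          = C₀ i * (K ^ (((m : ℝ)+1)/β) * f x ^ (γ - ((m : ℝ)+1)/β)) := by
        rw [hsub, show C₀ i * K ^ ((i : ℝ)/β) * f x ^ ((γ-1) - (i : ℝ)/β)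
              * (K ^ (((m : ℝ) - i + 1)/β) * f x ^ (1 - ((m : ℝ) - i + 1)/β))
            = C₀ i * ((K ^ ((i : ℝ)/β) * K ^ (((m : ℝ) - i + 1)/β))
              * (f x ^ ((γ-1) - (i : ℝ)/β) * f x ^ (1 - ((m : ℝ) - i + 1)/β))) from by ring,
          ← Real.rpow_add hK0, ← Real.rpow_add hfx,
          show (i : ℝ)/β + ((m : ℝ) - i + 1)/β = ((m : ℝ)+1)/β from by ring,
          show (γ-1) - (i : ℝ)/β + (1 - ((m : ℝ) - i + 1)/β) = γ - ((m : ℝ)+1)/β from by ring]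
      calc (m.choose i : ℝ) * |iteratedDerivWithin i u t x| * |iteratedDerivWithin (m-i) v t x|
          ≤ (m.choose i : ℝ) * (C₀ i * K ^ ((i : ℝ)/β) * f x ^ ((γ-1) - (i : ℝ)/β))
            * (K ^ (((m-i+1 : ℕ) : ℝ)/β) * f x ^ (1 - ((m-i+1 : ℕ) : ℝ)/β)) := by
            apply mul_le_mul (mul_le_mul_of_nonneg_left hA (Nat.cast_nonneg _)) hB
              (abs_nonneg _)
            exact mul_nonneg (Nat.cast_nonneg _) (mul_nonneg (mul_nonneg (hC₀pos i).le
              (Real.rpow_nonneg hK0.le _)) (Real.rpow_nonneg hfx.le _))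
        _ = ((m.choose i : ℝ) * C₀ i) * (K ^ (((m : ℝ)+1)/β) * f x ^ (γ - ((m : ℝ)+1)/β)) := by
            rw [show (m.choose i : ℝ) * (C₀ i * K ^ ((i : ℝ)/β) * f x ^ ((γ-1) - (i : ℝ)/β))
                * (K ^ (((m-i+1 : ℕ) : ℝ)/β) * f x ^ (1 - ((m-i+1 : ℕ) : ℝ)/β))
              = (m.choose i : ℝ) * ((C₀ i * K ^ ((i : ℝ)/β) * f x ^ ((γ-1) - (i : ℝ)/β))
                * (K ^ (((m-i+1 : ℕ) : ℝ)/β) * f x ^ (1 - ((m-i+1 : ℕ) : ℝ)/β))) from by ring,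
              key]
            ring
    have hsum : ∑ i ∈ Finset.range (m+1), (m.choose i : ℝ)
          * |iteratedDerivWithin i u t x| * |iteratedDerivWithin (m-i) v t x|
        ≤ S * (K ^ (((m : ℝ)+1)/β) * f x ^ (γ - ((m : ℝ)+1)/β)) := by
      rw [hSdef, Finset.sum_mul]
      exact Finset.sum_le_sum termwise
    have final : |iteratedDerivWithin (m+1) (fun y => f y ^ γ) t x|
        ≤ |γ| * S * (K ^ (((m : ℝ)+1)/β) * f x ^ (γ - ((m : ℝ)+1)/β)) := by
      rw [e1, e3, e4, abs_mul, mul_assoc]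
      exact mul_le_mul_of_nonneg_left (le_trans step hsum) (abs_nonneg γ)
    have cast1 : ((m+1 : ℕ) : ℝ) = (m : ℝ) + 1 := by push_cast; ring
    rw [cast1]
    calc |iteratedDerivWithin (m+1) (fun y => f y ^ γ) t x|
        ≤ |γ| * S * (K ^ (((m : ℝ)+1)/β) * f x ^ (γ - ((m : ℝ)+1)/β)) := final
      _ ≤ (|γ| * S + 1) * (K ^ (((m : ℝ)+1)/β) * f x ^ (γ - ((m : ℝ)+1)/β)) := by
          nlinarith [hX0]
      _ = (|γ| * S + 1) * K ^ (((m : ℝ)+1)/β) * f x ^ (γ - ((m : ℝ)+1)/β) := by ring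

/-- Derivative bounds for `f^α` via Faà di Bruno: there is `C = C(α,β)` such that for any
`f` in the flat Hölder cone with constant `K ≥ ‖f‖_∞`, every `k < β` and `x` with
`f(x) > 0`, `|d^k/dx^k (f^α)(x)| ≤ C K^(k/β) f(x)^(α - k/β)`. -/
theorem deriv_bounds_root
    (α β : ℝ) (hα0 : 0 < α) (hα1 : α ≤ 1) (hβ : 0 < β) :
    ∃ C : ℝ, 0 < C ∧ ∀ (n : ℕ), (n : ℝ) < β → β ≤ n + 1 →
      ∀ (f : ℝ → ℝ) (K : ℝ),
        (∀ x ∈ Icc (0:ℝ) 1, 0 ≤ f x) →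
        ContDiffOn ℝ n f (Icc (0:ℝ) 1) →
        (∀ x ∈ Icc (0:ℝ) 1, f x ≤ K) →
        (∀ x ∈ Icc (0:ℝ) 1, ∀ j : ℕ, 1 ≤ j → j ≤ n →
          |iteratedDerivWithin j f (Icc (0:ℝ) 1) x| ^ β ≤ K ^ j * f x ^ (β - (j : ℝ))) →
        ∀ (k : ℕ), (k : ℝ) < β → ∀ x ∈ Icc (0:ℝ) 1, 0 < f x →
          |iteratedDerivWithin k (fun t => f t ^ α) (Icc (0:ℝ) 1) x|
            ≤ C * K ^ ((k : ℝ) / β) * f x ^ (α - (k : ℝ) / β) := by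
  set N := ⌈β⌉₊ with hNdef
  have hN1 : 1 ≤ N := Nat.one_le_iff_ne_zero.mpr (by
    simp only [hNdef]
    exact (Nat.ceil_pos.mpr hβ).ne')
  have H : ∀ k : ℕ, ∃ C : ℝ, 0 < C ∧ ∀ _ : k ≤ N - 1,
      ∀ (t : Set ℝ), UniqueDiffOn ℝ t → ∀ (f : ℝ → ℝ) (K : ℝ),
        (∀ y ∈ t, 0 < f y) →
        ContDiffOn ℝ ((N-1 : ℕ)) f t →
        (∀ y ∈ t, f y ≤ K) →
        (∀ y ∈ t, ∀ j : ℕ, 1 ≤ j → j ≤ N-1 →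
          |iteratedDerivWithin j f t y| ≤ K ^ ((j : ℝ)/β) * f y ^ (1 - (j : ℝ)/β)) →
        ∀ x ∈ t, |iteratedDerivWithin k (fun y => f y ^ α) t x|
          ≤ C * K ^ ((k : ℝ)/β) * f x ^ (α - (k : ℝ)/β) := by
    intro k
    by_cases hk : k ≤ N - 1
    · obtain ⟨C, h1, h2⟩ := aux_bound β hβ (N-1) k hk α
      exact ⟨C, h1, fun _ => h2⟩
    · exact ⟨1, one_pos, fun h => absurd h hk⟩
  choose C₀ hpos hbd using H
  have hsumnn : 0 ≤ ∑ i ∈ Finset.range N, C₀ i :=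
    Finset.sum_nonneg fun i _ => (hpos i).le
  refine ⟨(∑ i ∈ Finset.range N, C₀ i) + 1, by linarith, ?_⟩
  intro n hnβ hβn f K hf0 hcd hfK hflat k hkβ x hx hfx
  have hnN : n + 1 = N := by
    have h1 : n < N := Nat.lt_ceil.mpr hnβ
    have h2 : N ≤ n + 1 := Nat.ceil_le.mpr (by exact_mod_cast hβn)
    omega
  have hkn : k ≤ n := by
    have : (k : ℝ) < (n : ℝ) + 1 := lt_of_lt_of_le hkβ hβn
    have : k < n + 1 := by exact_mod_cast this
    omega
  have hK0 : 0 < K := lt_of_lt_of_le hfx (hfK x hx)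
  have hcont : ContinuousWithinAt f (Icc (0:ℝ) 1) x := (hcd.continuousOn).continuousWithinAt hx
  have hmem : f ⁻¹' (Ioi (0:ℝ)) ∈ nhdsWithin x (Icc (0:ℝ) 1) := hcont (Ioi_mem_nhds hfx)
  obtain ⟨V, hVopen, hxV, hVsub⟩ := mem_nhdsWithin.mp hmem
  set tV : Set ℝ := Icc (0:ℝ) 1 ∩ V with htVdef
  have hxt : x ∈ tV := ⟨hx, hxV⟩
  have htpos : ∀ y ∈ tV, 0 < f y := fun y hy => hVsub ⟨hy.2, hy.1⟩
  have hut : UniqueDiffOn ℝ tV := fun y hy =>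
    (uniqueDiffOn_Icc_zero_one y hy.1).inter (hVopen.mem_nhds hy.2)
  have hloc : ∀ (j : ℕ) (g : ℝ → ℝ), ∀ y ∈ tV,
      iteratedDerivWithin j g tV y = iteratedDerivWithin j g (Icc (0:ℝ) 1) y :=
    fun j g y hy => locality_iter j g _ V hVopen hy.2
  have h4 : ∀ y ∈ tV, ∀ j : ℕ, 1 ≤ j → j ≤ n →
      |iteratedDerivWithin j f tV y| ≤ K ^ ((j : ℝ)/β) * f y ^ (1 - (j : ℝ)/β) := by
    intro y hy j hj1 hjn
    rw [hloc j f y hy]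
    have hfy := htpos y hy
    have hpow := hflat y hy.1 j hj1 hjn
    have habs : |iteratedDerivWithin j f (Icc (0:ℝ) 1) y|
        = (|iteratedDerivWithin j f (Icc (0:ℝ) 1) y| ^ β) ^ (1/β) := by
      rw [← Real.rpow_mul (abs_nonneg _), mul_one_div, div_self hβ.ne', Real.rpow_one]
    rw [habs]
    refine le_trans (Real.rpow_le_rpow (Real.rpow_nonneg (abs_nonneg _) _) hpow
      (by positivity)) ?_
    rw [Real.mul_rpow (by positivity) (Real.rpow_nonneg hfy.le _), ← Real.rpow_natCast K j,
      ← Real.rpow_mul hK0.le, ← Real.rpow_mul hfy.le,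
      show (j : ℝ) * (1/β) = (j : ℝ)/β from by ring,
      show (β - (j : ℝ)) * (1/β) = 1 - (j : ℝ)/β from by
        rw [mul_one_div, sub_div, div_self hβ.ne']]
  have hNn : N - 1 = n := by omega
  have hbd' := hbd k (by omega)
  rw [hNn] at hbd'
  have hcdt : ContDiffOn ℝ n f tV := hcd.mono inter_subset_left
  have hKt : ∀ y ∈ tV, f y ≤ K := fun y hy => hfK y hy.1
  have hfinal := hbd' tV hut f K htpos hcdt hKt h4 x hxt
  rw [← hloc k (fun y => f y ^ α) x hxt]
  have hC : C₀ k ≤ (∑ i ∈ Finset.range N, C₀ i) + 1 :=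
    le_add_of_le_of_nonneg (Finset.single_le_sum (fun i _ => (hpos i).le)
      (Finset.mem_range.mpr (by omega))) zero_le_one
  calc |iteratedDerivWithin k (fun y => f y ^ α) tV x|
      ≤ C₀ k * K ^ ((k : ℝ)/β) * f x ^ (α - (k : ℝ)/β) := hfinal
    _ ≤ ((∑ i ∈ Finset.range N, C₀ i) + 1) * K ^ ((k : ℝ)/β) * f x ^ (α - (k : ℝ)/β) := by
        apply mul_le_mul_of_nonneg_right (mul_le_mul_of_nonneg_right hC
          (Real.rpow_nonneg hK0.le _)) (Real.rpow_nonneg hfx.le _)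
end

section
/- Let γ > 0, β > 0 and f_γ : [0,1] → ℝ, f_γ(x) = x^γ. Then f_γ satisfies the flatness condition at level β (i.e. there exists κ ≥ 0 with |f_γ^(j)(x)|^β ≤ κ^j f_γ(x)^(β−j) for all x ∈ (0,1] and integers 1 ≤ j < β, and f_γ is ⌊β⌋-times differentiable on [0,1] with (β−⌊β⌋)-Hölder ⌊β⌋-th derivative) if and only if β ≤ γ. -/
open Set

open Set

/-- Small exponent contradiction. -/
lemma flat_aux (γ β C : ℝ) (h : γ < β) (hC : ∀ x ∈ Ioo (0:ℝ) 1, x ^ (γ - β) ≤ C) : False := by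
  set M := max C 1 with hM
  have hM1 : 1 ≤ M := le_max_right _ _
  have hbase : (1:ℝ) < 2 * M := by linarith
  set x := (2 * M) ^ ((γ - β)⁻¹) with hx
  have hexp : (γ - β)⁻¹ < 0 := inv_lt_zero.mpr (by linarith)
  have hx0 : (0:ℝ) < x := Real.rpow_pos_of_pos (by linarith) _
  have hx1 : x < 1 := Real.rpow_lt_one_of_one_lt_of_neg hbase hexp
  have hC' := hC x ⟨hx0, hx1⟩
  rw [hx, ← Real.rpow_mul (by linarith), inv_mul_cancel₀ (by linarith : γ - β ≠ 0),
    Real.rpow_one] at hC'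
  have : C ≤ M := le_max_left _ _
  linarith

noncomputable def mcoef (γ : ℝ) (k : ℕ) : ℝ := ∏ i ∈ Finset.range k, (γ - i)

lemma mderiv (γ : ℝ) (k : ℕ) (hk : (k:ℝ) + 1 ≤ γ) (x : ℝ) :
    HasDerivAt (fun x : ℝ => mcoef γ k * x ^ (γ - k))
      (mcoef γ (k+1) * x ^ (γ - (k+1 : ℕ))) x := by
  have h1 : (1:ℝ) ≤ γ - k := by linarith
  have h := (Real.hasDerivAt_rpow_const (p := γ - k) (x := x) (Or.inr h1)).const_mul (mcoef γ k)
  refine h.congr_deriv ?_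
  have he : γ - ((k+1 : ℕ) : ℝ) = γ - k - 1 := by push_cast; ring
  rw [he, mcoef, mcoef, Finset.prod_range_succ]
  ring

lemma miter (γ : ℝ) (n : ℕ) (hn : (n:ℝ) < γ) : ∀ k ≤ n, ∀ x ∈ Icc (0:ℝ) 1,
    iteratedDerivWithin k (fun x : ℝ => x ^ γ) (Icc (0:ℝ) 1) x = mcoef γ k * x ^ (γ - k) := by
  intro k
  induction k with
  | zero => intro _ x _; simp [mcoef]
  | succ k ih =>
    intro hk x hx
    have hu := uniqueDiffOn_Icc (zero_lt_one (α := ℝ))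
    rw [iteratedDerivWithin_succ]
    have heq : EqOn (iteratedDerivWithin k (fun x : ℝ => x ^ γ) (Icc (0:ℝ) 1))
        (fun x => mcoef γ k * x ^ (γ - k)) (Icc (0:ℝ) 1) :=
      fun y hy => ih (Nat.le_of_succ_le hk) y hy
    rw [derivWithin_congr heq (heq hx)]
    have hk' : (k:ℝ) + 1 ≤ γ := by
      have : ((k+1 : ℕ) : ℝ) ≤ (n : ℝ) := by exact_mod_cast hk
      push_cast at this; linarith
    exact (mderiv γ k hk' x).hasDerivWithinAt.derivWithin (hu x hx)

lemma mcont (γ : ℝ) (m : ℕ) : ∀ k : ℕ, (k:ℝ) + m ≤ γ →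
    ContDiffOn ℝ m (fun x : ℝ => mcoef γ k * x ^ (γ - k)) (Icc (0:ℝ) 1) := by
  induction m with
  | zero =>
    intro k hk
    have hpos : (0:ℝ) ≤ γ - k := by push_cast at hk; linarith
    have hc : Continuous fun x : ℝ => x ^ (γ - (k:ℝ)) :=
      continuous_iff_continuousAt.2 fun x => Real.continuousAt_rpow_const x _ (Or.inr hpos)
    exact_mod_cast (contDiffOn_zero (𝕜 := ℝ)).mpr (continuous_const.mul hc).continuousOn
  | succ m ih =>
    intro k hk
    push_cast at hk
    have hu := uniqueDiffOn_Icc (zero_lt_one (α := ℝ))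
    have hk1 : (k:ℝ) + 1 ≤ γ := by linarith [Nat.cast_nonneg (α := ℝ) m]
    have hcast : ((m+1 : ℕ) : WithTop ℕ∞) = (m : WithTop ℕ∞) + 1 := by push_cast; rfl
    rw [hcast, contDiffOn_succ_iff_derivWithin hu]
    refine ⟨fun x _ => ((mderiv γ k hk1 x).differentiableAt).differentiableWithinAt, ?_, ?_⟩
    · intro h; simp at h
    · refine (ih (k+1) (by push_cast; linarith)).congr fun y hy => ?_
      exact (mderiv γ k hk1 y).hasDerivWithinAt.derivWithin (hu y hy)


lemma sub_rpow_le (x y δ : ℝ) (hy : 0 ≤ y) (hxy : y ≤ x) (h0 : 0 ≤ δ) (h1 : δ ≤ 1) :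
    x ^ δ - y ^ δ ≤ (x - y) ^ δ := by
  have hx : 0 ≤ x := hy.trans hxy
  have h := NNReal.rpow_add_le_add_rpow ((x - y).toNNReal) (y.toNNReal) h0 h1
  rw [← Real.toNNReal_add (by linarith) hy, show x - y + y = x by ring] at h
  have h' := NNReal.coe_le_coe.2 h
  push_cast [Real.coe_toNNReal _ hx, Real.coe_toNNReal _ hy,
    Real.coe_toNNReal _ (by linarith : (0:ℝ) ≤ x - y)] at h'
  linarith

lemma holder_aux (δ α : ℝ) (hδ : 0 < δ) (hα0 : 0 < α) (hα1 : α ≤ 1) (hαδ : α ≤ δ)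
    {x y : ℝ} (hx : x ∈ Icc (0:ℝ) 1) (hy : y ∈ Icc (0:ℝ) 1) :
    |x ^ δ - y ^ δ| ≤ (δ + 1) * |x - y| ^ α := by
  wlog hxy : y ≤ x generalizing x y
  · have := this hy hx (le_of_not_ge hxy)
    rwa [abs_sub_comm (y ^ δ) (x ^ δ), abs_sub_comm y x] at this
  have h1 : y ^ δ ≤ x ^ δ := Real.rpow_le_rpow hy.1 hxy hδ.le
  have hd0 : (0:ℝ) ≤ x - y := by linarith
  have hd1 : x - y ≤ 1 := by have := hx.2; have := hy.1; linarith
  rw [abs_of_nonneg (by linarith), abs_of_nonneg hd0]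
  rcases le_total δ 1 with hcase | hcase
  · have h2 : x ^ δ - y ^ δ ≤ (x - y) ^ δ := sub_rpow_le x y δ hy.1 hxy hδ.le hcase
    have h3 : (x - y) ^ δ ≤ (x - y) ^ α :=
      Real.rpow_le_rpow_of_exponent_ge' hd0 hd1 hα0.le hαδ
    have h4 : (0:ℝ) ≤ (x - y) ^ α := Real.rpow_nonneg hd0 _
    nlinarith
  · -- Lipschitz case via MVT
    have key : ‖x ^ δ - y ^ δ‖ ≤ δ * ‖x - y‖ := by
      have := (convex_Icc (0:ℝ) 1).norm_image_sub_le_of_norm_hasDerivWithin_le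
        (f := fun t : ℝ => t ^ δ) (f' := fun t : ℝ => δ * t ^ (δ - 1)) (C := δ)
        (fun t _ => (Real.hasDerivAt_rpow_const (Or.inr hcase)).hasDerivWithinAt)
        (fun t ht => by
          rw [Real.norm_eq_abs, abs_of_nonneg (mul_nonneg hδ.le (Real.rpow_nonneg ht.1 _))]
          have h5 : t ^ (δ - 1) ≤ 1 := Real.rpow_le_one ht.1 ht.2 (by linarith)
          nlinarith)
        hy hx
      simpa using this
    rw [Real.norm_eq_abs, Real.norm_eq_abs, abs_of_nonneg (by linarith),
      abs_of_nonneg hd0] at key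
    have h3 : x - y ≤ (x - y) ^ α := by
      calc x - y = (x - y) ^ (1:ℝ) := (Real.rpow_one _).symm
        _ ≤ (x - y) ^ α := Real.rpow_le_rpow_of_exponent_ge' hd0 hd1 hα0.le hα1
    have h4 : (0:ℝ) ≤ (x - y) ^ α := Real.rpow_nonneg hd0 _
    nlinarith

/-- The monomial `x ↦ x^γ` belongs to the flat Hölder cone `H^β([0,1])` if and only if
`β ≤ γ`. -/
theorem monomial_in_flat_cone_iff
    (γ β : ℝ) (hγ : 0 < γ) (hβ : 0 < β) :
    (∃ n : ℕ, (n : ℝ) < β ∧ β ≤ n + 1 ∧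
      ContDiffOn ℝ n (fun x : ℝ => x ^ γ) (Icc (0:ℝ) 1) ∧
      (∃ L : ℝ, ∀ x ∈ Icc (0:ℝ) 1, ∀ y ∈ Icc (0:ℝ) 1,
        |iteratedDerivWithin n (fun x : ℝ => x ^ γ) (Icc (0:ℝ) 1) x -
          iteratedDerivWithin n (fun x : ℝ => x ^ γ) (Icc (0:ℝ) 1) y|
          ≤ L * |x - y| ^ (β - (n : ℝ))) ∧
      (∃ κ : ℝ, 0 ≤ κ ∧ ∀ x ∈ Ioc (0:ℝ) 1, ∀ j : ℕ, 1 ≤ j → (j : ℝ) < β →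
        |iteratedDerivWithin j (fun x : ℝ => x ^ γ) (Icc (0:ℝ) 1) x| ^ β
          ≤ κ ^ j * (x ^ γ) ^ (β - (j : ℝ))))
    ↔ β ≤ γ := by
  constructor
  · rintro ⟨n, hn1, hn2, hcd, ⟨L, hL⟩, ⟨κ, hκ0, hκ⟩⟩
    by_contra hlt
    push_neg at hlt
    cases n with
    | zero =>
      refine flat_aux γ β L hlt fun x hx => ?_
      have hxm : x ∈ Icc (0:ℝ) 1 := ⟨hx.1.le, hx.2.le⟩
      have h0 : (0:ℝ) ∈ Icc (0:ℝ) 1 := ⟨le_rfl, zero_le_one⟩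
      have h := hL x hxm 0 h0
      rw [iteratedDerivWithin_zero] at h
      simp only [Real.zero_rpow hγ.ne', sub_zero, Nat.cast_zero] at h
      rw [abs_of_nonneg (Real.rpow_nonneg hx.1.le _), abs_of_pos hx.1] at h
      rw [Real.rpow_sub hx.1, div_le_iff₀ (Real.rpow_pos_of_pos hx.1 β)]
      exact h
    | succ m =>
      have h1β : (1:ℝ) < β := by
        have h1m : (1:ℝ) ≤ ((m+1 : ℕ) : ℝ) := by exact_mod_cast Nat.one_le_iff_ne_zero.2 (Nat.succ_ne_zero m)
        linarith
      refine flat_aux γ β (κ / γ ^ β) hlt fun x hx => ?_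
      have hx0 : (0:ℝ) < x := hx.1
      have hxm : x ∈ Icc (0:ℝ) 1 := ⟨hx.1.le, hx.2.le⟩
      have hu := uniqueDiffOn_Icc (zero_lt_one (α := ℝ))
      have hd := hκ x ⟨hx.1, hx.2.le⟩ 1 le_rfl (by exact_mod_cast h1β)
      rw [iteratedDerivWithin_one,
        derivWithin_of_mem_nhds (Icc_mem_nhds hx.1 hx.2),
        Real.deriv_rpow_const x γ] at hd
      rw [abs_of_pos (mul_pos hγ (Real.rpow_pos_of_pos hx0 _)),
        Real.mul_rpow hγ.le (Real.rpow_nonneg hx0.le _), pow_one,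
        ← Real.rpow_mul hx0.le, ← Real.rpow_mul hx0.le] at hd
      rw [Nat.cast_one] at hd
      have hg : (0:ℝ) < γ ^ β := Real.rpow_pos_of_pos hγ _
      have hx2 : (0:ℝ) < x ^ (γ * (β - 1)) := Real.rpow_pos_of_pos hx0 _
      rw [le_div_iff₀ hg]
      have key : x ^ (γ - β) * x ^ (γ * (β - 1)) = x ^ ((γ - 1) * β) := by
        rw [← Real.rpow_add hx0]; congr 1; ring
      calc x ^ (γ - β) * γ ^ β = γ ^ β * x ^ ((γ - 1) * β) / x ^ (γ * (β - 1)) := by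
            rw [← key]; field_simp
        _ ≤ κ * x ^ (γ * (β - 1)) / x ^ (γ * (β - 1)) := by gcongr
        _ = κ := by field_simp
  · intro hβγ
    have hceil1 : 1 ≤ ⌈β⌉₊ := Nat.one_le_ceil_iff.2 hβ
    set n : ℕ := ⌈β⌉₊ - 1 with hn
    have hcast : ((n:ℕ):ℝ) = (⌈β⌉₊ : ℝ) - 1 := by
      rw [hn, Nat.cast_sub hceil1, Nat.cast_one]
    have hn1 : (n:ℝ) < β := by
      rw [hcast]; have := Nat.ceil_lt_add_one hβ.le; linarith
    have hn2 : β ≤ (n:ℝ) + 1 := by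
      rw [hcast]; have := Nat.le_ceil β; linarith
    have hnγ : (n:ℝ) < γ := lt_of_lt_of_le hn1 hβγ
    refine ⟨n, hn1, hn2, ?_, ?_, ?_⟩
    · exact (mcont γ n 0 (by simpa using hnγ.le)).congr fun x hx => by simp [mcoef]
    · refine ⟨|mcoef γ n| * (γ - n + 1), fun x hx y hy => ?_⟩
      rw [miter γ n hnγ n le_rfl x hx, miter γ n hnγ n le_rfl y hy, ← mul_sub, abs_mul]
      have h := holder_aux (γ - n) (β - n) (by linarith) (by linarith) (by linarith)
        (by linarith) hx hy
      calc |mcoef γ n| * |x ^ (γ - (n:ℝ)) - y ^ (γ - (n:ℝ))|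
          ≤ |mcoef γ n| * ((γ - n + 1) * |x - y| ^ (β - (n:ℝ))) :=
            mul_le_mul_of_nonneg_left h (abs_nonneg _)
        _ = |mcoef γ n| * (γ - n + 1) * |x - y| ^ (β - (n:ℝ)) := by ring
    · refine ⟨γ ^ β, Real.rpow_nonneg hγ.le _, fun x hx j hj1 hjβ => ?_⟩
      have hjn : j ≤ n := by
        have h1 : (j:ℝ) < (n:ℝ) + 1 := lt_of_lt_of_le hjβ hn2
        have h2 : j < n + 1 := by exact_mod_cast h1
        omega
      have hx0 : (0:ℝ) < x := hx.1
      have hx1 : x ≤ 1 := hx.2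
      rw [miter γ n hnγ j hjn x ⟨hx0.le, hx1⟩]
      have hc0 : 0 ≤ mcoef γ j := Finset.prod_nonneg fun i hi => by
        have : (i:ℝ) < j := by exact_mod_cast Finset.mem_range.mp hi
        linarith
      have hcle : mcoef γ j ≤ γ ^ (j:ℝ) := by
        rw [Real.rpow_natCast]
        have := Finset.prod_le_prod (s := Finset.range j) (f := fun i : ℕ => γ - (i:ℝ))
          (g := fun _ : ℕ => γ)
          (fun i hi => by
            show (0:ℝ) ≤ γ - (i:ℝ)
            have : (i:ℝ) < j := by exact_mod_cast Finset.mem_range.mp hi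
            linarith)
          (fun i _ => by
            show γ - (i:ℝ) ≤ γ
            have : (0:ℝ) ≤ (i:ℝ) := Nat.cast_nonneg i; linarith)
        simpa [mcoef] using this
      have hxg : ∀ e : ℝ, 0 < x ^ e := fun e => Real.rpow_pos_of_pos hx0 e
      rw [abs_of_nonneg (mul_nonneg hc0 (hxg _).le),
        Real.mul_rpow hc0 (hxg _).le, ← Real.rpow_natCast (γ ^ β) j,
        ← Real.rpow_mul hγ.le, ← Real.rpow_mul hx0.le (γ - (j:ℝ)) β,
        ← Real.rpow_mul hx0.le γ (β - (j:ℝ))]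
      have e1 : γ * (β - j) ≤ (γ - j) * β := by
        nlinarith [Nat.cast_nonneg (α := ℝ) j]
      have h2 : x ^ ((γ - (j:ℝ)) * β) ≤ x ^ (γ * (β - (j:ℝ))) :=
        Real.rpow_le_rpow_of_exponent_ge hx0 hx1 e1
      have h3 : mcoef γ j ^ β ≤ γ ^ (β * (j:ℝ)) := by
        calc mcoef γ j ^ β ≤ (γ ^ (j:ℝ)) ^ β := Real.rpow_le_rpow hc0 hcle hβ.le
          _ = γ ^ ((j:ℝ) * β) := (Real.rpow_mul hγ.le _ _).symm
          _ = γ ^ (β * (j:ℝ)) := by rw [mul_comm]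
      exact mul_le_mul h3 h2 (hxg _).le (Real.rpow_nonneg hγ.le _)
end
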